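/- arXiv:2404.11494 — 10 statements merged into one kernel-verified Lean document; each statement's English description precedes it below -/
import Mathlib

section
/- Let M be a commutative cancellative monoid satisfying the ascending chain condition on principal ideals (ACCP). If S ⊆ M is a submonoid with S^× = M^× ∩ S, then S satisfies the ACCP. -/
/-- A commutative monoid satisfies the ACCP if every ascending chain of principal
ideals `f n * M ⊆ f (n+1) * M` (i.e. `f (n+1) ∣ f n`) stabilizes
(i.e. eventually `f N * M = f n * M`, which given the chain amounts to `f N ∣ f n`). -/
def MulACCP (M : Type*) [CommMonoid M] : Prop :=
  ∀ f : ℕ → M, (∀ n, f (n + 1) ∣ f n) → ∃ N, ∀ n ≥ N, f N ∣ f n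

theorem Submonoid.dvd_of_dvd_of_coe_dvd {M : Type*} [CancelCommMonoid M] {S : Submonoid M}
    (hS : ∀ x ∈ S, IsUnit x → ∃ y ∈ S, x * y = 1) {a b : S} (hab : a ∣ b)
    (hba : (b : M) ∣ a) : b ∣ a := by
  obtain ⟨d, rfl⟩ := hab
  obtain ⟨c, hc⟩ := hba
  -- cancelling `a` in `a = a * d * c` makes the cofactor `d` a unit of `M`
  have hdc : (d : M) * c = 1 := by
    rw [← mul_eq_left (a := (a : M)), ← mul_assoc]
    exact hc.symm
  obtain ⟨y, hyS, hdy⟩ := hS d d.2 (.of_mul_eq_one _ hdc)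
  refine ⟨⟨y, hyS⟩, Subtype.ext ?_⟩
  simp only [Submonoid.coe_mul, mul_assoc, hdy, mul_one]

theorem dvd_of_le_of_forall_succ_dvd {M : Type*} [Monoid M] {f : ℕ → M}
    (hf : ∀ n, f (n + 1) ∣ f n) {m n : ℕ} (hmn : m ≤ n) : f n ∣ f m :=
  Nat.rel_of_forall_rel_succ_of_le (fun a b => b ∣ a) hf hmn

theorem stmt1 {M : Type*} [CancelCommMonoid M] (hM : MulACCP M)
    (S : Submonoid M) (hS : ∀ x ∈ S, IsUnit x → ∃ y ∈ S, x * y = 1) :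
    MulACCP S := by
  intro f hf
  obtain ⟨N, hN⟩ := hM (fun n => f n) fun n => map_dvd S.subtype (hf n)
  exact ⟨N, fun n hn =>
    Submonoid.dvd_of_dvd_of_coe_dvd hS (dvd_of_le_of_forall_succ_dvd hf hn) (hN n hn)⟩
end

section
/- Let M be a commutative cancellative monoid and let M₀ and N be submonoids of M such that N is s-noetherian and M = M₀ N. Then M satisfies the ACCP if and only if every ascending chain of principal ideals (r_n M)_{n ≥ 1} with all r_n ∈ M₀ stabilizes. -/
/-- A subset `I` of a commutative monoid is an `s`-ideal if `I * M = I`. -/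
def IsSIdeal {M : Type*} [CommMonoid M] (I : Set M) : Prop :=
  ∀ a ∈ I, ∀ b : M, a * b ∈ I

/-- A commutative monoid is `s`-noetherian if every ascending chain of `s`-ideals
stabilizes. -/
def SNoetherian (M : Type*) [CommMonoid M] : Prop :=
  ∀ f : ℕ → Set M, (∀ n, IsSIdeal (f n)) → (∀ n, f n ⊆ f (n + 1)) →
    ∃ m, ∀ n ≥ m, f n = f m

namespace Stmt4Aux

variable {M : Type*} [CancelCommMonoid M]

lemma chain_dvd_of_le (f : ℕ → M) (hf : ∀ n, f (n + 1) ∣ f n) {i j : ℕ} (hij : i ≤ j) :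
    f j ∣ f i := by
  induction hij with
  | refl => exact dvd_refl _
  | step _ ih => exact (hf _).trans ih

/-- Anchor lemma: given a subsequence (indexed by a strictly monotone `u`) of a sequence in
`N`, there is an index `k` and a further subsequence beyond `k`, all of whose members are
divisible (in `N`) by the `k`-th member. -/
lemma anchor {N : Submonoid M} (hN : SNoetherian N) (b : ℕ → N) (u : ℕ → ℕ)
    (hu : StrictMono u) :
    ∃ k, ∃ w : ℕ → ℕ, StrictMono w ∧ (∀ j, k < w j) ∧ ∀ j, b (u k) ∣ b (u (w j)) := by
  obtain ⟨p, hp⟩ := hN (fun n => {x : N | ∃ k ≤ n, b (u k) ∣ x})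
    (by
      intro n x hx c
      obtain ⟨k, hk, hd⟩ := hx
      exact ⟨k, hk, hd.mul_right c⟩)
    (by
      intro n x hx
      obtain ⟨k, hk, hd⟩ := hx
      exact ⟨k, Nat.le_succ_of_le hk, hd⟩)
  have key : ∀ n, p ≤ n → ∃ k, k ≤ p ∧ b (u k) ∣ b (u n) := by
    intro n hn
    have hmem : b (u n) ∈ {x : N | ∃ k ≤ n, b (u k) ∣ x} := ⟨n, le_refl n, dvd_refl _⟩
    have := (Set.ext_iff.mp (hp n hn) (b (u n))).mp hmem
    exact this
  have cof : ∃ k, ∀ m, ∃ n, m < n ∧ b (u k) ∣ b (u n) := by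
    by_contra hc
    push_neg at hc
    choose mb hmb using hc
    set B := (Finset.range (p + 1)).sup mb with hB
    obtain ⟨k, hkp, hd⟩ := key (p + B + 1) (by omega)
    have hmk : mb k ≤ B := Finset.le_sup (Finset.mem_range.mpr (Nat.lt_succ_of_le hkp))
    exact hmb k (p + B + 1) (by omega) hd
  obtain ⟨k, hk⟩ := cof
  choose nxt hlt hdvd using hk
  obtain ⟨w, hw0, hwS⟩ : ∃ w : ℕ → ℕ, w 0 = nxt k ∧ ∀ j, w (j + 1) = nxt (w j) :=
    ⟨fun j => Nat.rec (nxt k) (fun _ prev => nxt prev) j, rfl, fun j => rfl⟩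
  have hwlt : ∀ j, k < w j := by
    intro j
    induction j with
    | zero => rw [hw0]; exact hlt k
    | succ j ih => rw [hwS]; exact ih.trans (hlt (w j))
  refine ⟨k, w, strictMono_nat_of_lt_succ (fun j => ?_), hwlt, fun j => ?_⟩
  · rw [hwS]; exact hlt (w j)
  · cases j with
    | zero => rw [hw0]; exact hdvd k
    | succ j => rw [hwS]; exact hdvd (w j)

structure SubChain {M : Type*} [CancelCommMonoid M] {N : Submonoid M} (b : ℕ → N) where
  i : ℕ
  u : ℕ → ℕ
  hu : StrictMono u
  hlt : ∀ j, i < u j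
  hdvd : ∀ j, b i ∣ b (u j)

noncomputable def subChainStep {N : Submonoid M} (hN : SNoetherian N) (b : ℕ → N)
    (s : SubChain b) : SubChain b where
  i := s.u (anchor hN b s.u s.hu).choose
  u := s.u ∘ (anchor hN b s.u s.hu).choose_spec.choose
  hu := s.hu.comp (anchor hN b s.u s.hu).choose_spec.choose_spec.1
  hlt := fun j => s.hu ((anchor hN b s.u s.hu).choose_spec.choose_spec.2.1 j)
  hdvd := fun j => (anchor hN b s.u s.hu).choose_spec.choose_spec.2.2 j

lemma subChainStep_lt {N : Submonoid M} (hN : SNoetherian N) (b : ℕ → N)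
    (s : SubChain b) : s.i < (subChainStep hN b s).i :=
  s.hlt _

lemma subChainStep_dvd {N : Submonoid M} (hN : SNoetherian N) (b : ℕ → N)
    (s : SubChain b) : b s.i ∣ b (subChainStep hN b s).i :=
  s.hdvd _

noncomputable def subChainInit {N : Submonoid M} (hN : SNoetherian N) (b : ℕ → N) :
    SubChain b where
  i := (anchor hN b id strictMono_id).choose
  u := (anchor hN b id strictMono_id).choose_spec.choose
  hu := (anchor hN b id strictMono_id).choose_spec.choose_spec.1
  hlt := fun j => (anchor hN b id strictMono_id).choose_spec.choose_spec.2.1 j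
  hdvd := fun j => (anchor hN b id strictMono_id).choose_spec.choose_spec.2.2 j

noncomputable def subChainSeq {N : Submonoid M} (hN : SNoetherian N) (b : ℕ → N) :
    ℕ → SubChain b
  | 0 => subChainInit hN b
  | n + 1 => subChainStep hN b (subChainSeq hN b n)

/-- Every sequence in an s-noetherian submonoid admits an infinite subsequence that is
nondecreasing with respect to divisibility in `N`. -/
lemma exists_mono_subseq {N : Submonoid M} (hN : SNoetherian N) (b : ℕ → N) :
    ∃ φ : ℕ → ℕ, StrictMono φ ∧ ∀ j, b (φ j) ∣ b (φ (j + 1)) := by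
  refine ⟨fun j => (subChainSeq hN b j).i, strictMono_nat_of_lt_succ (fun j => ?_),
    fun j => ?_⟩
  · exact subChainStep_lt hN b (subChainSeq hN b j)
  · exact subChainStep_dvd hN b (subChainSeq hN b j)

end Stmt4Aux

open Stmt4Aux in
theorem stmt4 {M : Type*} [CancelCommMonoid M] (M₀ N : Submonoid M)
    (hN : SNoetherian N) (hsum : ∀ x : M, ∃ a ∈ M₀, ∃ b ∈ N, x = a * b) :
    MulACCP M ↔
      ∀ r : ℕ → M, (∀ n, r n ∈ M₀) → (∀ n, r (n + 1) ∣ r n) →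
        ∃ m, ∀ n ≥ m, r m ∣ r n := by
  constructor
  · intro hacc r _ hchain
    exact hacc r hchain
  · intro H f hf
    by_contra hcon
    push_neg at hcon
    choose nx hge hndvd using hcon
    have hlt : ∀ m, m < nx m := by
      intro m
      rcases Nat.lt_or_ge m (nx m) with h | h
      · exact h
      · exfalso
        have hmn : nx m = m := le_antisymm h (hge m)
        exact hndvd m (by rw [hmn])
    obtain ⟨ν, hν0, hνS⟩ : ∃ ν : ℕ → ℕ, ν 0 = 0 ∧ ∀ j, ν (j + 1) = nx (ν j) :=
      ⟨fun j => Nat.rec 0 (fun _ prev => nx prev) j, rfl, fun j => rfl⟩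
    have hνmono : StrictMono ν := strictMono_nat_of_lt_succ (fun j => by
      rw [hνS]; exact hlt (ν j))
    choose a ha bb hbb hab using fun k => hsum (f (ν k))
    set bN : ℕ → N := fun k => ⟨bb k, hbb k⟩ with hbN
    obtain ⟨φ, hφ, hbdvd⟩ := exists_mono_subseq hN bN
    have key : ∀ j, ∃ E S : M, a (φ j) = a (φ (j + 1)) * (E * S) ∧
        f (ν (φ j)) = f (ν (φ (j + 1))) * S := by
      intro j
      obtain ⟨E, hE⟩ := hbdvd j
      have hEM : bb (φ (j + 1)) = bb (φ j) * (E : M) := by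
        have := congrArg Subtype.val hE
        simpa using this
      have hff : f (ν (φ (j + 1))) ∣ f (ν (φ j)) :=
        chain_dvd_of_le f hf (hνmono.monotone (hφ.monotone (Nat.le_succ j)))
      obtain ⟨S, hS⟩ := hff
      refine ⟨(E : M), S, ?_, hS⟩
      have h1 : a (φ j) * bb (φ j) = a (φ (j + 1)) * ((E : M) * S) * bb (φ j) := by
        calc a (φ j) * bb (φ j) = f (ν (φ j)) := (hab (φ j)).symm
          _ = f (ν (φ (j + 1))) * S := hS
          _ = a (φ (j + 1)) * bb (φ (j + 1)) * S := by rw [hab (φ (j + 1))]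
          _ = a (φ (j + 1)) * (bb (φ j) * (E : M)) * S := by rw [hEM]
          _ = a (φ (j + 1)) * ((E : M) * S) * bb (φ j) := by
              simp only [mul_comm, mul_assoc, mul_left_comm]
      exact mul_right_cancel h1
    obtain ⟨J, hJ⟩ := H (fun j => a (φ j)) (fun j => ha (φ j)) (fun j => by
      obtain ⟨E, S, hA, _⟩ := key j
      exact ⟨E * S, hA⟩)
    obtain ⟨t, ht⟩ := hJ (J + 1) (Nat.le_succ J)
    obtain ⟨E, S, hA, hfS⟩ := key J
    have hone : a (φ J) * 1 = a (φ J) * (t * (E * S)) := by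
      rw [mul_one]
      calc a (φ J) = a (φ (J + 1)) * (E * S) := hA
        _ = a (φ J) * t * (E * S) := by rw [← ht]
        _ = a (φ J) * (t * (E * S)) := by rw [mul_assoc]
    have hone' : (1 : M) = t * (E * S) := mul_left_cancel hone
    have hdvd2 : f (ν (φ J)) ∣ f (ν (φ (J + 1))) := by
      refine ⟨t * E, ?_⟩
      calc f (ν (φ (J + 1))) = f (ν (φ (J + 1))) * 1 := (mul_one _).symm
        _ = f (ν (φ (J + 1))) * (t * (E * S)) := by rw [← hone']
        _ = f (ν (φ (J + 1))) * S * (t * E) := by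
            simp only [mul_comm, mul_assoc, mul_left_comm]
        _ = f (ν (φ J)) * (t * E) := by rw [← hfS]
    have hle : ν (φ J + 1) ≤ ν (φ (J + 1)) :=
      hνmono.monotone (Nat.succ_le_of_lt (hφ (Nat.lt_succ_self J)))
    have hchain2 : f (ν (φ (J + 1))) ∣ f (ν (φ J + 1)) := chain_dvd_of_le f hf hle
    have hfinal : f (ν (φ J)) ∣ f (ν (φ J + 1)) := hdvd2.trans hchain2
    rw [hνS (φ J)] at hfinal
    exact hndvd (ν (φ J)) hfinal
end

section
/- Let P ⊆ ℕ_{≥2} be an infinite set of pairwise relatively prime positive integers, and let M_P be the additive submonoid of ℚ_{≥0} generated by {1/p : p ∈ P}. Then the set of atoms of M_P is exactly {1/p : p ∈ P}. -/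
/-- An atom of the additive submonoid `M`: a nonzero element of `M` that is not the
sum of two nonzero elements of `M`. -/
def IsAtomOf {α : Type*} [AddCommMonoid α] (M : AddSubmonoid α) (a : α) : Prop :=
  a ∈ M ∧ a ≠ 0 ∧ ∀ b ∈ M, ∀ c ∈ M, b + c = a → b = 0 ∨ c = 0

/-- The length set of `q` in `M`: the set of all `ℓ` such that `q` is a sum of `ℓ`
atoms of `M` (counted with multiplicity). -/
def LengthSet {α : Type*} [AddCommMonoid α] (M : AddSubmonoid α) (q : α) : Set ℕ :=
  {ℓ | ∃ s : Multiset α, Multiset.card s = ℓ ∧ (∀ a ∈ s, IsAtomOf M a) ∧ s.sum = q}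

/-- The additive submonoid `M` satisfies the ACCP: every ascending chain of principal
ideals `f n + M ⊆ f (n+1) + M` stabilizes. -/
def AddACCP {α : Type*} [AddCommMonoid α] (M : AddSubmonoid α) : Prop :=
  ∀ f : ℕ → α, (∀ n, f n ∈ M) → (∀ n, ∃ c ∈ M, f n = f (n + 1) + c) →
    ∃ N, ∀ n ≥ N, ∃ c ∈ M, f n = f N + c

/-- The Puiseux monoid generated by the reciprocals of the elements of `P`. -/
def MP (P : Set ℕ) : AddSubmonoid ℚ :=
  AddSubmonoid.closure {q : ℚ | ∃ p ∈ P, q = 1 / (p : ℚ)}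

/-- If a prime `r` divides no denominator of an element of `s`, it does not divide
the denominator of `s.sum`. -/
lemma good_sum (r : ℕ) (hr : r.Prime) (s : Multiset ℚ)
    (h : ∀ x ∈ s, ¬ r ∣ x.den) : ¬ r ∣ s.sum.den := by
  induction s using Multiset.induction with
  | empty => simpa using hr.one_lt.ne'
  | cons a t ih =>
    rw [Multiset.sum_cons]
    intro hdvd
    have h1 : (a + t.sum).den ∣ a.den * t.sum.den := Rat.add_den_dvd a t.sum
    have h2 : r ∣ a.den * t.sum.den := hdvd.trans h1
    rcases (Nat.Prime.dvd_mul hr).mp h2 with h3 | h3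
    · exact h a (Multiset.mem_cons_self a t) h3
    · exact ih (fun x hx => h x (Multiset.mem_cons_of_mem hx)) h3

lemma one_div_den {q : ℕ} (hq : 0 < q) : (1 / (q : ℚ)).den = q := by
  rw [one_div]
  exact Rat.inv_natCast_den_of_pos hq

lemma key_lemma (P : Set ℕ) (h2 : ∀ p ∈ P, 2 ≤ p)
    (hcop : ∀ p ∈ P, ∀ q ∈ P, p ≠ q → Nat.Coprime p q)
    {p : ℕ} (hp : p ∈ P) (s : Multiset ℚ)
    (hs : ∀ x ∈ s, ∃ q ∈ P, x = 1 / (q : ℚ))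
    (hsum : s.sum = 1 / (p : ℚ)) (hcard : 2 ≤ Multiset.card s) : False := by
  by_cases hmem : (1 / (p : ℚ)) ∈ s
  · obtain ⟨t, rfl⟩ := Multiset.exists_cons_of_mem hmem
    rw [Multiset.sum_cons] at hsum
    have ht0 : t.sum = 0 := by linarith [hsum]
    have htne : t ≠ 0 := by
      intro h
      subst h
      simp at hcard
    obtain ⟨x, hx⟩ := Multiset.exists_mem_of_ne_zero htne
    obtain ⟨q, hq, rfl⟩ := hs x (Multiset.mem_cons_of_mem hx)
    have hq2 : (2 : ℚ) ≤ q := by exact_mod_cast h2 q hq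
    have hxpos : (0 : ℚ) < 1 / (q : ℚ) := by positivity
    have hnonneg : ∀ y ∈ t, (0 : ℚ) ≤ y := by
      intro y hy
      obtain ⟨q', hq', rfl⟩ := hs y (Multiset.mem_cons_of_mem hy)
      have : (2 : ℚ) ≤ q' := by exact_mod_cast h2 q' hq'
      positivity
    have := Multiset.single_le_sum hnonneg _ hx
    rw [ht0] at this
    linarith
  · -- every element has denominator coprime to p.minFac
    set r := p.minFac with hr
    have hp2 : 2 ≤ p := h2 p hp
    have hrprime : r.Prime := Nat.minFac_prime (by omega)
    have hgood : ∀ x ∈ s, ¬ r ∣ x.den := by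
      intro x hx
      obtain ⟨q, hq, rfl⟩ := hs x hx
      have hq2 : 2 ≤ q := h2 q hq
      have hqp : q ≠ p := by
        intro h; subst h; exact hmem hx
      have hco : Nat.Coprime p q := hcop p hp q hq (Ne.symm hqp)
      have hden : (1 / (q : ℚ)).den = q := one_div_den (by omega)
      rw [hden]
      intro hdvd
      have : r ∣ Nat.gcd p q := Nat.dvd_gcd p.minFac_dvd hdvd
      rw [hco] at this
      exact hrprime.one_lt.ne' (Nat.dvd_one.mp this)
    have := good_sum r hrprime s hgood
    rw [hsum, one_div_den (by omega)] at this
    exact this p.minFac_dvd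

theorem stmt5 (P : Set ℕ) (hinf : P.Infinite) (h2 : ∀ p ∈ P, 2 ≤ p)
    (hcop : ∀ p ∈ P, ∀ q ∈ P, p ≠ q → Nat.Coprime p q) :
    ∀ a : ℚ, IsAtomOf (MP P) a ↔ ∃ p ∈ P, a = 1 / (p : ℚ) := by
  intro a
  constructor
  · rintro ⟨ha, hne, hatom⟩
    obtain ⟨s, hs, hsum⟩ := AddSubmonoid.exists_multiset_of_mem_closure ha
    have hsne : s ≠ 0 := by
      intro h; subst h; simp at hsum; exact hne hsum.symm
    obtain ⟨x, hx⟩ := Multiset.exists_mem_of_ne_zero hsne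
    obtain ⟨t, rfl⟩ := Multiset.exists_cons_of_mem hx
    rw [Multiset.sum_cons] at hsum
    have hxM : x ∈ MP P := AddSubmonoid.subset_closure (hs x hx)
    have htM : t.sum ∈ MP P :=
      AddSubmonoid.multiset_sum_mem _ t
        (fun y hy => AddSubmonoid.subset_closure (hs y (Multiset.mem_cons_of_mem hy)))
    obtain ⟨q, hq, rfl⟩ := hs x hx
    rcases hatom _ hxM _ htM hsum with h0 | h0
    · exfalso
      have hq2 : (2 : ℚ) ≤ q := by exact_mod_cast h2 q hq
      have : (0 : ℚ) < 1 / (q : ℚ) := by positivity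
      rw [h0] at this
      exact lt_irrefl 0 this
    · exact ⟨q, hq, by rw [← hsum, h0, add_zero]⟩
  · rintro ⟨p, hp, rfl⟩
    have hp2 : 2 ≤ p := h2 p hp
    have hppos : (0 : ℚ) < p := by exact_mod_cast (by omega : 0 < p)
    refine ⟨AddSubmonoid.subset_closure ⟨p, hp, rfl⟩, by positivity, ?_⟩
    intro b hb c hc hbc
    by_contra hcon
    push_neg at hcon
    obtain ⟨hb0, hc0⟩ := hcon
    obtain ⟨sb, hsb, hsbsum⟩ := AddSubmonoid.exists_multiset_of_mem_closure hb
    obtain ⟨sc, hsc, hscsum⟩ := AddSubmonoid.exists_multiset_of_mem_closure hc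
    have hbne : sb ≠ 0 := by intro h; subst h; simp at hsbsum; exact hb0 hsbsum.symm
    have hcne : sc ≠ 0 := by intro h; subst h; simp at hscsum; exact hc0 hscsum.symm
    refine key_lemma P h2 hcop hp (sb + sc) ?_ ?_ ?_
    · intro x hx
      rcases Multiset.mem_add.mp hx with h | h
      · exact hsb x h
      · exact hsc x h
    · rw [Multiset.sum_add, hsbsum, hscsum, hbc]
    · rw [Multiset.card_add]
      have h1 : 1 ≤ Multiset.card sb := Multiset.card_pos.mpr hbne
      have h2 : 1 ≤ Multiset.card sc := Multiset.card_pos.mpr hcne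
      omega
end

section
/- Let P ⊆ ℕ_{≥2} be an infinite set of pairwise relatively prime positive integers. Then the Puiseux monoid M_P = ⟨1/p : p ∈ P⟩ satisfies the ascending chain condition on principal ideals. -/
theorem addACCP_of_lt_add {α β : Type*} [AddCommMonoid α] [PartialOrder β] [WellFoundedLT β]
    (M : AddSubmonoid α) (φ : α → β) (hφ : ∀ a ∈ M, ∀ c ∈ M, c ≠ 0 → φ a < φ (a + c)) :
    AddACCP M := by
  intro f hf hchain
  choose c hcM hfc using hchain
  have hle (n : ℕ) : φ (f (n + 1)) ≤ φ (f n) := by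
    rw [hfc n]
    by_cases hc : c n = 0
    · rw [hc, add_zero]
    · exact (hφ _ (hf _) _ (hcM n) hc).le
  obtain ⟨N, hN⟩ :=
    WellFoundedLT.antitone_chain_condition (antitone_nat_of_succ_le (f := φ ∘ f) hle)
  have hstep (n : ℕ) (hn : N ≤ n) : f (n + 1) = f n := by
    have hc : c n = 0 := by
      by_contra hc
      have hlt := hφ _ (hf (n + 1)) _ (hcM n) hc
      rw [← hfc n] at hlt
      exact hlt.ne ((hN (n + 1) (by omega)).symm.trans (hN n hn))
    rw [hfc n, hc, add_zero]
  refine ⟨N, fun n hn => ⟨0, zero_mem _, ?_⟩⟩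
  induction n, hn using Nat.le_induction with
  | base => rw [add_zero]
  | succ n hn ih => rw [hstep n hn, ih]

section CoprimeDenominators

variable {ι : Type*} {w : ι → ℕ} {s : Finset ι} [DecidableEq ι]

theorem natCast_sum_mul_prod_erase (hw : ∀ i, w i ≠ 0) (a : ι → ℕ) :
    ((∑ i ∈ s, a i * ∏ j ∈ s.erase i, w j : ℕ) : ℚ) =
      (∑ i ∈ s, (a i : ℚ) / w i) * ∏ j ∈ s, (w j : ℚ) := by
  push_cast
  rw [Finset.sum_mul]
  refine Finset.sum_congr rfl fun i hi => ?_
  rw [← Finset.mul_prod_erase s _ hi]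
  have := hw i
  field_simp

theorem sum_mul_prod_erase_modEq (a : ι → ℕ) {k : ι} (hk : k ∈ s) :
    ∑ i ∈ s, a i * ∏ j ∈ s.erase i, w j ≡ a k * ∏ j ∈ s.erase k, w j [MOD w k] := by
  rw [← Finset.add_sum_erase s _ hk]
  have hdvd : w k ∣ ∑ i ∈ s.erase k, a i * ∏ j ∈ s.erase i, w j :=
    Finset.dvd_sum fun i hi => dvd_mul_of_dvd_right
      (Finset.dvd_prod_of_mem w (Finset.mem_erase.2 ⟨(Finset.ne_of_mem_erase hi).symm, hk⟩)) _
  simpa using (Nat.modEq_zero_iff_dvd.2 hdvd).add_left (a k * ∏ j ∈ s.erase k, w j)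

/-- Clearing the denominators and reducing mod `w k` kills every term but the `k`-th. -/
theorem modEq_of_sum_div_eq (hw : ∀ i, w i ≠ 0)
    (hcop : Pairwise fun i j => Nat.Coprime (w i) (w j))
    {a b : ι → ℕ} (h : ∑ i ∈ s, (a i : ℚ) / w i = ∑ i ∈ s, (b i : ℚ) / w i)
    {k : ι} (hk : k ∈ s) : a k ≡ b k [MOD w k] := by
  have hnat : ∑ i ∈ s, a i * ∏ j ∈ s.erase i, w j = ∑ i ∈ s, b i * ∏ j ∈ s.erase i, w j := by
    exact_mod_cast (natCast_sum_mul_prod_erase hw a).trans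
      (h ▸ (natCast_sum_mul_prod_erase hw b).symm)
  refine Nat.ModEq.cancel_right_of_coprime ?_
    ((sum_mul_prod_erase_modEq a hk).symm.trans (hnat ▸ sum_mul_prod_erase_modEq b hk))
  exact Nat.Coprime.prod_right fun j hj => hcop (Finset.ne_of_mem_erase hj).symm

end CoprimeDenominators

namespace MP

variable {P : Set ℕ}

def value (g : P →₀ ℕ) : ℚ := g.sum fun p n => (n : ℚ) / p

def wholePart (g : P →₀ ℕ) : ℕ := g.sum fun p n => n / p

def residueSum (g : P →₀ ℕ) : ℕ := g.sum fun p n => n % p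

def weight (g : P →₀ ℕ) : ℕ ×ₗ ℕ := toLex (wholePart g, residueSum g)

theorem value_add (g h : P →₀ ℕ) : value (g + h) = value g + value h :=
  Finsupp.sum_add_index' (by simp) fun _ _ _ => by push_cast; rw [add_div]

theorem exists_value_eq_of_mem {q : ℚ} (hq : q ∈ MP P) : ∃ g : P →₀ ℕ, value g = q := by
  have hgen : {q : ℚ | ∃ p ∈ P, q = 1 / (p : ℚ)} = Set.range fun p : P => 1 / (p : ℚ) :=
    Set.ext fun _ => ⟨fun ⟨p, hp, h⟩ => ⟨⟨p, hp⟩, h.symm⟩, fun ⟨p, h⟩ => ⟨p, p.2, h.symm⟩⟩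
  rw [MP, hgen, AddSubmonoid.mem_closure_range_iff] at hq
  obtain ⟨g, rfl⟩ := hq
  exact ⟨g, by simp [value, Finsupp.sum, div_eq_mul_inv]⟩

theorem modEq_of_value_eq (hpos : ∀ p ∈ P, 0 < p) (hcop : P.Pairwise Nat.Coprime)
    {g h : P →₀ ℕ} (hgh : value g = value h) (p : P) : g p ≡ h p [MOD p] := by
  classical
  by_cases hp : p ∈ g.support ∪ h.support
  · refine modEq_of_sum_div_eq (w := Subtype.val) (fun p => (hpos p p.2).ne')
      (fun p q hpq => hcop p.2 q.2 (Subtype.val_injective.ne hpq)) ?_ hp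
    rwa [value, value, Finsupp.sum_of_support_subset g Finset.subset_union_left _ (by simp),
      Finsupp.sum_of_support_subset h Finset.subset_union_right _ (by simp)] at hgh
  · simp only [Finset.mem_union, Finsupp.mem_support_iff, not_or, not_not] at hp
    rw [hp.1, hp.2]

theorem sum_mod_eq_of_value_eq {M : Type*} [AddCommMonoid M] (hpos : ∀ p ∈ P, 0 < p)
    (hcop : P.Pairwise Nat.Coprime) {g h : P →₀ ℕ} (hgh : value g = value h)
    (F : P → ℕ → M) (hF : ∀ p, F p 0 = 0) :
    (g.sum fun p n => F p (n % p)) = h.sum fun p n => F p (n % p) := by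
  classical
  rw [Finsupp.sum_of_support_subset g Finset.subset_union_left _ (by simp [hF]),
    Finsupp.sum_of_support_subset h Finset.subset_union_right _ (by simp [hF])]
  exact Finset.sum_congr rfl fun p _ => by rw [modEq_of_value_eq hpos hcop hgh p]

theorem wholePart_add_sum_mod (g : P →₀ ℕ) :
    (wholePart g : ℚ) + (g.sum fun p n => ((n % p : ℕ) : ℚ) / p) = value g := by
  simp only [wholePart, value, Finsupp.sum, Nat.cast_sum, ← Finset.sum_add_distrib]
  refine Finset.sum_congr rfl fun p _ => ?_
  rcases eq_or_ne (p : ℕ) 0 with hp | hp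
  · simp [hp]
  · rw [eq_div_iff (Nat.cast_ne_zero.2 hp), add_mul, div_mul_cancel₀ _ (Nat.cast_ne_zero.2 hp)]
    exact_mod_cast Nat.div_add_mod' (g p) p

theorem weight_eq_of_value_eq (hpos : ∀ p ∈ P, 0 < p) (hcop : P.Pairwise Nat.Coprime)
    {g h : P →₀ ℕ} (hgh : value g = value h) : weight g = weight h := by
  have hfrac := sum_mod_eq_of_value_eq hpos hcop hgh (fun p r => (r : ℚ) / p) (by simp)
  have hwhole : (wholePart g : ℚ) = wholePart h := by
    linarith [wholePart_add_sum_mod g, wholePart_add_sum_mod h]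
  rw [weight, weight, Nat.cast_injective hwhole, residueSum, residueSum,
    sum_mod_eq_of_value_eq hpos hcop hgh (fun _ r => r) (fun _ => rfl)]

theorem wholePart_le_add (g d : P →₀ ℕ) : wholePart g ≤ wholePart (g + d) := by
  classical
  rw [wholePart, wholePart, Finsupp.sum_of_support_subset g Finset.subset_union_left _ (by simp),
    Finsupp.sum_of_support_subset (g + d) Finsupp.support_add _ (by simp)]
  exact Finset.sum_le_sum fun p _ => Nat.div_le_div_right (Nat.le_add_right _ _)

theorem residueSum_add_of_wholePart_eq {g d : P →₀ ℕ}
    (h : wholePart (g + d) = wholePart g) :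
    residueSum (g + d) = residueSum g + d.degree := by
  classical
  set s := g.support ∪ d.support
  have hsum {k : P →₀ ℕ} (hk : k.support ⊆ s) (F : P → ℕ → ℕ) (hF : ∀ p, F p 0 = 0) :
      k.sum F = ∑ p ∈ s, F p (k p) :=
    Finsupp.sum_of_support_subset k hk _ fun p _ => hF p
  have hdiv : ∀ p ∈ s, (g p + d p) / p = g p / p := by
    rw [wholePart, wholePart, hsum Finsupp.support_add _ (by simp),
      hsum Finset.subset_union_left _ (by simp)] at h
    exact fun p hp => ((Finset.sum_eq_sum_iff_of_le fun p _ =>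
      Nat.div_le_div_right (Nat.le_add_right _ _)).1 h.symm p hp).symm
  rw [residueSum, residueSum, Finsupp.degree_apply, hsum Finsupp.support_add _ (by simp),
    hsum Finset.subset_union_left _ (by simp),
    Finset.sum_subset Finset.subset_union_right fun p _ hp => Finsupp.notMem_support_iff.1 hp,
    ← Finset.sum_add_distrib]
  refine Finset.sum_congr rfl fun p hp => ?_
  have hg := Nat.div_add_mod (g p) p
  have hgd := Nat.div_add_mod (g p + d p) p
  rw [hdiv p hp] at hgd
  rw [Finsupp.add_apply]
  linarith

theorem weight_lt_add (g : P →₀ ℕ) {d : P →₀ ℕ} (hd : d ≠ 0) : weight g < weight (g + d) := by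
  rw [weight, weight, Prod.Lex.toLex_lt_toLex]
  rcases (wholePart_le_add g d).lt_or_eq with hlt | heq
  · exact Or.inl hlt
  · refine Or.inr ⟨heq, ?_⟩
    rw [residueSum_add_of_wholePart_eq heq.symm]
    exact Nat.lt_add_of_pos_right (Nat.pos_of_ne_zero ((Finsupp.degree_eq_zero_iff d).not.2 hd))

/-- Some representation of `q`; junk unless `q ∈ MP P`. -/
noncomputable def rep (P : Set ℕ) (q : ℚ) : P →₀ ℕ := Classical.epsilon fun g => value g = q

theorem value_rep {q : ℚ} (hq : q ∈ MP P) : value (rep P q) = q :=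
  Classical.epsilon_spec (exists_value_eq_of_mem hq)

end MP

open MP in
theorem stmt7_general (P : Set ℕ) (h2 : ∀ p ∈ P, 2 ≤ p)
    (hcop : ∀ p ∈ P, ∀ q ∈ P, p ≠ q → Nat.Coprime p q) :
    AddACCP (MP P) := by
  have hpos : ∀ p ∈ P, 0 < p := fun p hp => two_pos.trans_le (h2 p hp)
  refine addACCP_of_lt_add (MP P) (fun q => weight (rep P q)) fun a ha c hc hc0 => ?_
  have hrep : rep P c ≠ 0 := by
    rintro h0
    rw [← value_rep hc, h0, value, Finsupp.sum_zero_index] at hc0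
    exact hc0 rfl
  calc weight (rep P a) < weight (rep P a + rep P c) := weight_lt_add _ hrep
    _ = weight (rep P (a + c)) := weight_eq_of_value_eq hpos hcop <| by
      rw [value_add, value_rep ha, value_rep hc, value_rep (add_mem ha hc)]

theorem stmt7 (P : Set ℕ) (hinf : P.Infinite) (h2 : ∀ p ∈ P, 2 ≤ p)
    (hcop : ∀ p ∈ P, ∀ q ∈ P, p ≠ q → Nat.Coprime p q) :
    AddACCP (MP P) :=
  stmt7_general P h2 hcop
end

section
/- Let P ⊆ ℕ_{≥2} be an infinite set of pairwise relatively prime positive integers and M_P = ⟨1/p : p ∈ P⟩ ⊆ ℚ_{≥0}. Then the system of length sets of M_P equals {m + nP : m, n ∈ ℕ₀}, where nP denotes the n-fold sumset of P and 0P = {0}. -/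
/-- The `n`-fold sumset of `P ⊆ ℕ` (with the `0`-fold sumset being `{0}`). -/
def nfoldSumset (P : Set ℕ) (n : ℕ) : Set ℕ :=
  {x | ∃ s : Multiset ℕ, Multiset.card s = n ∧ (∀ a ∈ s, a ∈ P) ∧ s.sum = x}

namespace Stmt8Aux

open Multiset

/-- Sum of reciprocals of a multiset of naturals. -/
def rsum (s : Multiset ℕ) : ℚ := (s.map fun p : ℕ => 1 / (p : ℚ)).sum

/-- All elements of `s` belong to `P`. -/
def Good (P : Set ℕ) (s : Multiset ℕ) : Prop := ∀ p ∈ s, p ∈ P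

@[simp] lemma rsum_zero : rsum 0 = 0 := rfl

@[simp] lemma rsum_cons (p : ℕ) (s : Multiset ℕ) :
    rsum (p ::ₘ s) = 1 / (p : ℚ) + rsum s := by simp [rsum]

@[simp] lemma rsum_add (s t : Multiset ℕ) : rsum (s + t) = rsum s + rsum t := by
  simp [rsum]

@[simp] lemma rsum_singleton (p : ℕ) : rsum {p} = 1 / (p : ℚ) := by
  simp [rsum]

lemma rsum_replicate (p : ℕ) (hp : p ≠ 0) : rsum (replicate p p) = 1 := by
  have : (p : ℚ) ≠ 0 := by exact_mod_cast hp
  simp [rsum, Multiset.map_replicate, Multiset.sum_replicate, nsmul_eq_mul]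
  field_simp

lemma rsum_nat_mul (n p : ℕ) (hp : p ≠ 0) : rsum (replicate (n * p) p) = n := by
  have : (p : ℚ) ≠ 0 := by exact_mod_cast hp
  rw [rsum, Multiset.map_replicate, Multiset.sum_replicate, nsmul_eq_mul]
  push_cast
  field_simp

lemma rsum_nonneg {P : Set ℕ} (h2 : ∀ p ∈ P, 2 ≤ p) :
    ∀ {s : Multiset ℕ}, Good P s → 0 ≤ rsum s := by
  intro s
  induction s using Multiset.induction_on with
  | empty => intro _; simp
  | cons q t ih =>
    intro hs
    rw [rsum_cons]
    have hq2 : 2 ≤ q := h2 q (hs q (Multiset.mem_cons_self _ _))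
    have hqpos : (0:ℚ) < q := by exact_mod_cast Nat.lt_of_lt_of_le Nat.zero_lt_two hq2
    have hq1 : (0:ℚ) < 1 / q := by
      rw [one_div]
      exact inv_pos.mpr hqpos
    have := ih (fun r hr => hs r (Multiset.mem_cons_of_mem hr))
    linarith

lemma rsum_pos {P : Set ℕ} (h2 : ∀ p ∈ P, 2 ≤ p) {s : Multiset ℕ} (hs : Good P s)
    (hne : s ≠ 0) : 0 < rsum s := by
  obtain ⟨p, hp⟩ := Multiset.exists_mem_of_ne_zero hne
  obtain ⟨s', rfl⟩ : ∃ s', s = p ::ₘ s' := ⟨s.erase p, (Multiset.cons_erase hp).symm⟩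
  rw [rsum_cons]
  have hp2 : 2 ≤ p := h2 p (hs p (Multiset.mem_cons_self _ _))
  have hppos : (0:ℚ) < p := by exact_mod_cast Nat.lt_of_lt_of_le Nat.zero_lt_two hp2
  have h1 : (0:ℚ) < 1 / p := by
    rw [one_div]
    exact inv_pos.mpr hppos
  have h2' : 0 ≤ rsum s' := rsum_nonneg h2 (fun r hr => hs r (Multiset.mem_cons_of_mem hr))
  linarith

lemma rsum_eq_sum_count {s : Multiset ℕ} {A : Finset ℕ} (hA : s.toFinset ⊆ A) :
    rsum s = ∑ p ∈ A, (s.count p : ℚ) / p := by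
  rw [rsum, Finset.sum_multiset_map_count s (fun p : ℕ => 1 / (p : ℚ))]
  rw [Finset.sum_subset hA (by
    intro p _ hp
    have : s.count p = 0 := by
      simp only [Multiset.mem_toFinset] at hp
      exact Multiset.count_eq_zero_of_notMem hp
    simp [this])]
  apply Finset.sum_congr rfl
  intro p _
  rw [nsmul_eq_mul]
  ring

/-- Key divisibility lemma: pairwise coprime denominators. -/
lemma keyDvd {P : Set ℕ} (h2 : ∀ p ∈ P, 2 ≤ p)
    (hcop : ∀ p ∈ P, ∀ q ∈ P, p ≠ q → Nat.Coprime p q)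
    {F : Finset ℕ} (hF : ↑F ⊆ P) (c : ℕ → ℤ) (n : ℤ)
    (h : ∑ p ∈ F, (c p : ℚ) / p = n) :
    ∀ p ∈ F, (p : ℤ) ∣ c p := by
  have hne : ∀ p ∈ F, (p : ℚ) ≠ 0 := by
    intro p hp
    have := h2 p (hF hp)
    positivity
  have key : ∑ p ∈ F, c p * ∏ q ∈ F.erase p, (q : ℤ) = n * ∏ q ∈ F, (q : ℤ) := by
    have hQ : ∑ p ∈ F, (c p : ℚ) * ∏ q ∈ F.erase p, (q : ℚ) = (n : ℚ) * ∏ q ∈ F, (q : ℚ) := by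
      have := congrArg (· * (∏ q ∈ F, (q : ℚ))) h
      simp only [Finset.sum_mul] at this
      rw [← this]
      apply Finset.sum_congr rfl
      intro p hp
      have hp0 : (p : ℚ) ≠ 0 := hne p hp
      rw [← Finset.mul_prod_erase F _ hp]
      field_simp
    have hcast : ((∑ p ∈ F, c p * ∏ q ∈ F.erase p, (q : ℤ) : ℤ) : ℚ)
        = ((n * ∏ q ∈ F, (q : ℤ) : ℤ) : ℚ) := by push_cast; exact hQ
    exact_mod_cast hcast
  intro p hp
  have h1 : (p : ℤ) ∣ ∑ q ∈ F, c q * ∏ r ∈ F.erase q, (r : ℤ) := by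
    rw [key]
    exact Dvd.dvd.mul_left (Finset.dvd_prod_of_mem _ hp) n
  have h2' : (p : ℤ) ∣ ∑ q ∈ F.erase p, c q * ∏ r ∈ F.erase q, (r : ℤ) := by
    apply Finset.dvd_sum
    intro q hq
    obtain ⟨hqp, hqF⟩ := Finset.mem_erase.mp hq
    exact Dvd.dvd.mul_left (Finset.dvd_prod_of_mem _
      (Finset.mem_erase.mpr ⟨fun he => hqp he.symm, hp⟩)) _
  have h3 : (p : ℤ) ∣ c p * ∏ r ∈ F.erase p, (r : ℤ) := by
    have := Finset.add_sum_erase F (fun q => c q * ∏ r ∈ F.erase q, (r : ℤ)) hp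
    have hd : (p : ℤ) ∣ (c p * ∏ r ∈ F.erase p, (r : ℤ)) +
        ∑ q ∈ F.erase p, c q * ∏ r ∈ F.erase q, (r : ℤ) := this ▸ h1
    rw [add_comm] at hd
    exact (dvd_add_right h2').mp hd
  have hc : Nat.Coprime p (∏ r ∈ F.erase p, r) := by
    apply Nat.Coprime.prod_right
    intro r hr
    obtain ⟨hrp, hrF⟩ := Finset.mem_erase.mp hr
    exact hcop p (hF hp) r (hF hrF) (fun he => hrp he.symm)
  have hic : IsCoprime (p : ℤ) ((∏ r ∈ F.erase p, r : ℕ) : ℤ) := Nat.isCoprime_iff_coprime.mpr hc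
  have : ((∏ r ∈ F.erase p, r : ℕ) : ℤ) = ∏ r ∈ F.erase p, (r : ℤ) := by push_cast; rfl
  rw [this] at hic
  exact hic.dvd_of_dvd_mul_right h3

/-- Uniqueness of reduced representations. -/
lemma reduced_unique {P : Set ℕ} (h2 : ∀ p ∈ P, 2 ≤ p)
    (hcop : ∀ p ∈ P, ∀ q ∈ P, p ≠ q → Nat.Coprime p q)
    {s t : Multiset ℕ} (hs : Good P s) (ht : Good P t)
    (hsc : ∀ p ∈ P, s.count p < p) (htc : ∀ p ∈ P, t.count p < p)
    (d : ℤ) (h : rsum s = d + rsum t) : s = t ∧ d = 0 := by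
  set F : Finset ℕ := s.toFinset ∪ t.toFinset with hF
  have hFP : ↑F ⊆ P := by
    intro p hp
    simp only [hF, Finset.coe_union, Set.mem_union, Finset.mem_coe, Multiset.mem_toFinset] at hp
    rcases hp with hp | hp
    · exact hs p hp
    · exact ht p hp
  have hsum : ∑ p ∈ F, (((s.count p : ℤ) - t.count p : ℤ) : ℚ) / p = (d : ℚ) := by
    have h1 : rsum s = ∑ p ∈ F, (s.count p : ℚ) / p :=
      rsum_eq_sum_count (Finset.subset_union_left)
    have h2' : rsum t = ∑ p ∈ F, (t.count p : ℚ) / p :=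
      rsum_eq_sum_count (Finset.subset_union_right)
    have : ∑ p ∈ F, (((s.count p : ℤ) - t.count p : ℤ) : ℚ) / p
        = ∑ p ∈ F, ((s.count p : ℚ) / p - (t.count p : ℚ) / p) := by
      apply Finset.sum_congr rfl
      intro p _
      push_cast
      ring
    rw [this, Finset.sum_sub_distrib, ← h1, ← h2', h]
    ring
  have hdvd := keyDvd h2 hcop hFP (fun p => (s.count p : ℤ) - t.count p) d hsum
  have hcount : ∀ p, s.count p = t.count p := by
    intro p
    by_cases hp : p ∈ F
    · have hP := hFP hp
      have h1 := hsc p hP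
      have h2'' := htc p hP
      have hdp : (p : ℤ) ∣ (s.count p : ℤ) - t.count p := hdvd p hp
      have habs : |(s.count p : ℤ) - (t.count p : ℤ)| < (p : ℤ) :=
        abs_lt.mpr ⟨by omega, by omega⟩
      have hz : (s.count p : ℤ) - t.count p = 0 := Int.eq_zero_of_abs_lt_dvd hdp habs
      omega
    · simp only [hF, Finset.mem_union, Multiset.mem_toFinset] at hp
      push_neg at hp
      rw [Multiset.count_eq_zero_of_notMem hp.1, Multiset.count_eq_zero_of_notMem hp.2]
  have hst : s = t := Multiset.ext.mpr hcount
  refine ⟨hst, ?_⟩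
  rw [hst] at h
  have : (d : ℚ) = 0 := by linarith
  exact_mod_cast this

/-- Canonical decomposition: every good multiset splits into an integer part and a
reduced part. -/
lemma decomp {P : Set ℕ} (h2 : ∀ p ∈ P, 2 ≤ p) :
    ∀ N (s : Multiset ℕ), Multiset.card s ≤ N → Good P s →
    ∃ c u : Multiset ℕ, Good P c ∧ Good P u ∧ (∀ p ∈ P, c.count p < p) ∧
      rsum s = (Multiset.card u : ℚ) + rsum c ∧
      Multiset.card s = Multiset.card c + u.sum := by
  intro N
  induction N with
  | zero =>
    intro s hcard hs
    have : s = 0 := Multiset.card_eq_zero.mp (Nat.le_zero.mp hcard)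
    subst this
    exact ⟨0, 0, by intro p hp; simp at hp, by intro p hp; simp at hp,
      fun p hp => by simpa using Nat.lt_of_lt_of_le Nat.zero_lt_two (h2 p hp),
      by simp, by simp⟩
  | succ N ih =>
    intro s hcard hs
    by_cases h : ∃ p ∈ s.toFinset, p ≤ s.count p
    · obtain ⟨p, hpF, hpc⟩ := h
      have hpP : p ∈ P := hs p (Multiset.mem_toFinset.mp hpF)
      have hp2 : 2 ≤ p := h2 p hpP
      have hle : Multiset.replicate p p ≤ s := by
        rw [Multiset.le_iff_count]
        intro q
        rw [Multiset.count_replicate]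
        split
        · next he => subst he; exact hpc
        · exact Nat.zero_le _
      set s' := s - Multiset.replicate p p with hs'
      have hadd : s' + Multiset.replicate p p = s := tsub_add_cancel_of_le hle
      have hcards : Multiset.card s = Multiset.card s' + p := by
        rw [← hadd, Multiset.card_add, Multiset.card_replicate]
      have hcard' : Multiset.card s' ≤ N := by omega
      have hgood' : Good P s' := fun q hq => hs q (Multiset.mem_of_le (Multiset.sub_le_self _ _) hq)
      obtain ⟨c, u, hgc, hgu, hcr, hr, hcd⟩ := ih s' hcard' hgood'
      refine ⟨c, p ::ₘ u, hgc, ?_, hcr, ?_, ?_⟩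
      · intro q hq
        rcases Multiset.mem_cons.mp hq with h | h
        · exact h ▸ hpP
        · exact hgu q h
      · have h1 : rsum s = rsum s' + 1 := by
          rw [← hadd, rsum_add, rsum_replicate p (by omega)]
        rw [h1, hr, Multiset.card_cons]
        push_cast
        ring
      · rw [hcards, hcd, Multiset.sum_cons]
        ring
    · push_neg at h
      refine ⟨s, 0, hs, by intro p hp; simp at hp, ?_, by simp, by simp⟩
      intro p hp
      by_cases hps : p ∈ s.toFinset
      · exact h p hps
      · rw [Multiset.count_eq_zero_of_notMem (by simpa using hps)]
        have := h2 p hp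
        omega

lemma mem_MP_of_good {P : Set ℕ} : ∀ {s : Multiset ℕ}, Good P s → rsum s ∈ MP P := by
  intro s
  induction s using Multiset.induction_on with
  | empty => intro _; simpa using (MP P).zero_mem
  | cons p t ih =>
    intro hg
    rw [rsum_cons]
    exact add_mem (AddSubmonoid.subset_closure ⟨p, hg p (Multiset.mem_cons_self _ _), rfl⟩)
      (ih fun q hq => hg q (Multiset.mem_cons_of_mem hq))

lemma exists_nat_multiset {P : Set ℕ} :
    ∀ {S : Multiset ℚ}, (∀ a ∈ S, ∃ p ∈ P, a = 1 / (p : ℚ)) →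
    ∃ s : Multiset ℕ, Good P s ∧ Multiset.card s = Multiset.card S ∧ rsum s = S.sum := by
  intro S
  induction S using Multiset.induction_on with
  | empty => intro _; exact ⟨0, by intro p hp; simp at hp, by simp, by simp⟩
  | cons a T ih =>
    intro hS
    obtain ⟨p, hpP, hpa⟩ := hS a (Multiset.mem_cons_self _ _)
    obtain ⟨s, hg, hc, hr⟩ := ih fun b hb => hS b (Multiset.mem_cons_of_mem hb)
    refine ⟨p ::ₘ s, ?_, by simp [hc], by rw [rsum_cons, Multiset.sum_cons, hr, hpa]⟩
    intro q hq
    rcases Multiset.mem_cons.mp hq with h | h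
    · exact h ▸ hpP
    · exact hg q h

lemma mem_MP_iff {P : Set ℕ} {q : ℚ} :
    q ∈ MP P ↔ ∃ s : Multiset ℕ, Good P s ∧ rsum s = q := by
  constructor
  · intro hq
    obtain ⟨S, hS, hsum⟩ := AddSubmonoid.exists_multiset_of_mem_closure hq
    obtain ⟨s, hg, _, hr⟩ := exists_nat_multiset (P := P) hS
    exact ⟨s, hg, hr.trans hsum⟩
  · rintro ⟨s, hg, rfl⟩
    exact mem_MP_of_good hg

lemma one_div_ne_zero' {P : Set ℕ} (h2 : ∀ p ∈ P, 2 ≤ p) {p : ℕ} (hp : p ∈ P) :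
    (1 / (p : ℚ)) ≠ 0 := by
  have := h2 p hp
  have : (p : ℚ) ≠ 0 := by positivity
  exact one_div_ne_zero this

/-- Characterization of the atoms of `MP P`. -/
lemma isAtom_iff {P : Set ℕ} (h2 : ∀ p ∈ P, 2 ≤ p)
    (hcop : ∀ p ∈ P, ∀ q ∈ P, p ≠ q → Nat.Coprime p q) {a : ℚ} :
    IsAtomOf (MP P) a ↔ ∃ p ∈ P, a = 1 / (p : ℚ) := by
  constructor
  · rintro ⟨haM, ha0, hat⟩
    obtain ⟨s, hg, rfl⟩ := mem_MP_iff.mp haM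
    have hsne : s ≠ 0 := by rintro rfl; exact ha0 rfl
    have hcard1 : Multiset.card s = 1 := by
      rcases Nat.lt_or_ge (Multiset.card s) 2 with h | h
      · have : Multiset.card s ≠ 0 := fun hc => hsne (Multiset.card_eq_zero.mp hc)
        omega
      · exfalso
        obtain ⟨p, hp⟩ := Multiset.exists_mem_of_ne_zero hsne
        obtain ⟨s', rfl⟩ : ∃ s', s = p ::ₘ s' := ⟨s.erase p, (Multiset.cons_erase hp).symm⟩
        have hs'ne : s' ≠ 0 := by
          rintro rfl
          simp at h
        have hpP : p ∈ P := hg p (Multiset.mem_cons_self _ _)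
        have hg' : Good P s' := fun q hq => hg q (Multiset.mem_cons_of_mem hq)
        have hb : (1 / (p : ℚ)) ∈ MP P := AddSubmonoid.subset_closure ⟨p, hpP, rfl⟩
        have hc : rsum s' ∈ MP P := mem_MP_of_good hg'
        rcases hat _ hb _ hc (rsum_cons p s').symm with h0 | h0
        · exact one_div_ne_zero' h2 hpP h0
        · exact (rsum_pos h2 hg' hs'ne).ne' h0
    obtain ⟨p, rfl⟩ := Multiset.card_eq_one.mp hcard1
    exact ⟨p, hg p (Multiset.mem_singleton_self p), (rsum_singleton p)⟩
  · rintro ⟨p, hpP, rfl⟩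
    refine ⟨AddSubmonoid.subset_closure ⟨p, hpP, rfl⟩, one_div_ne_zero' h2 hpP, ?_⟩
    intro b hb c hc hbc
    obtain ⟨s, hgs, rfl⟩ := mem_MP_iff.mp hb
    obtain ⟨t, hgt, rfl⟩ := mem_MP_iff.mp hc
    have hst : rsum (s + t) = 1 / (p : ℚ) := by rw [rsum_add, hbc]
    have hgst : Good P (s + t) := by
      intro q hq
      rcases Multiset.mem_add.mp hq with h | h
      · exact hgs q h
      · exact hgt q h
    obtain ⟨c', u', hgc', hgu', hcr', hr', hcd'⟩ :=
      decomp h2 (Multiset.card (s + t)) (s + t) le_rfl hgst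
    have hsingred : ∀ q ∈ P, Multiset.count q ({p} : Multiset ℕ) < q := by
      intro q hq
      rw [Multiset.count_singleton]
      split
      · next he => subst he; exact h2 q hq
      · exact Nat.lt_of_lt_of_le Nat.zero_lt_two (h2 q hq)
    have hkey : rsum c' = (-(Multiset.card u' : ℤ) : ℤ) + rsum {p} := by
      rw [rsum_singleton, ← hst, hr']
      push_cast
      ring
    obtain ⟨hcp, hd0⟩ := reduced_unique h2 hcop hgc' (by
        intro q hq
        rw [Multiset.mem_singleton] at hq
        exact hq ▸ hpP) hcr' hsingred _ hkey
    have hu0 : Multiset.card u' = 0 := by omega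
    have : Multiset.card s + Multiset.card t = 1 := by
      have hu'0 : u' = 0 := Multiset.card_eq_zero.mp hu0
      rw [← Multiset.card_add, hcd', hcp, hu'0]
      simp
    rcases Nat.eq_zero_or_pos (Multiset.card s) with h0 | h0
    · left
      rw [Multiset.card_eq_zero.mp h0]
      rfl
    · right
      have : Multiset.card t = 0 := by omega
      rw [Multiset.card_eq_zero.mp this]
      rfl

lemma mem_lengthSet_iff {P : Set ℕ} (h2 : ∀ p ∈ P, 2 ≤ p)
    (hcop : ∀ p ∈ P, ∀ q ∈ P, p ≠ q → Nat.Coprime p q) {q : ℚ} {ℓ : ℕ} :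
    ℓ ∈ LengthSet (MP P) q ↔
      ∃ s : Multiset ℕ, Good P s ∧ Multiset.card s = ℓ ∧ rsum s = q := by
  constructor
  · rintro ⟨S, hcard, hat, hsum⟩
    obtain ⟨s, hg, hc, hr⟩ := exists_nat_multiset (P := P)
      (fun a ha => (isAtom_iff h2 hcop).mp (hat a ha))
    exact ⟨s, hg, hc.trans hcard, hr.trans hsum⟩
  · rintro ⟨s, hg, hc, hr⟩
    refine ⟨s.map fun p : ℕ => 1 / (p : ℚ), by simpa using hc, ?_, hr⟩
    intro a ha
    obtain ⟨p, hp, rfl⟩ := Multiset.mem_map.mp ha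
    exact (isAtom_iff h2 hcop).mpr ⟨p, hg p hp, rfl⟩

lemma rsum_bind_replicate {P : Set ℕ} (h2 : ∀ p ∈ P, 2 ≤ p) :
    ∀ {u : Multiset ℕ}, Good P u →
      rsum (u.bind fun p => Multiset.replicate p p) = Multiset.card u := by
  intro u
  induction u using Multiset.induction_on with
  | empty => intro _; simp
  | cons p t ih =>
    intro hg
    rw [Multiset.cons_bind, rsum_add, ih (fun q hq => hg q (Multiset.mem_cons_of_mem hq)),
      rsum_replicate p (by have := h2 p (hg p (Multiset.mem_cons_self _ _)); omega),
      Multiset.card_cons]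
    push_cast
    ring

/-- The main length-set computation. -/
lemma lengthSet_eq {P : Set ℕ} (h2 : ∀ p ∈ P, 2 ≤ p)
    (hcop : ∀ p ∈ P, ∀ q ∈ P, p ≠ q → Nat.Coprime p q)
    {c : Multiset ℕ} (hc : Good P c) (hcr : ∀ p ∈ P, c.count p < p) (n : ℕ) :
    LengthSet (MP P) ((n : ℚ) + rsum c) =
      {x | ∃ k ∈ nfoldSumset P n, x = Multiset.card c + k} := by
  ext ℓ
  constructor
  · intro hℓ
    obtain ⟨s, hg, hcard, hr⟩ := (mem_lengthSet_iff h2 hcop).mp hℓ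
    obtain ⟨c', u', hgc', hgu', hcr', hr', hcd'⟩ :=
      decomp h2 (Multiset.card s) s le_rfl hg
    have hkey : rsum c' = ((n : ℤ) - Multiset.card u' : ℤ) + rsum c := by
      have : (Multiset.card u' : ℚ) + rsum c' = (n : ℚ) + rsum c := by rw [← hr', hr]
      push_cast
      linarith
    obtain ⟨hcc, hd0⟩ := reduced_unique h2 hcop hgc' hc hcr' hcr _ hkey
    have hn : Multiset.card u' = n := by omega
    refine ⟨u'.sum, ⟨u', hn, hgu', rfl⟩, ?_⟩
    rw [← hcard, hcd', hcc]
  · rintro ⟨k, ⟨u, hucard, hup, husum⟩, rfl⟩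
    apply (mem_lengthSet_iff h2 hcop).mpr
    refine ⟨c + u.bind fun p => Multiset.replicate p p, ?_, ?_, ?_⟩
    · intro q hq
      rcases Multiset.mem_add.mp hq with h | h
      · exact hc q h
      · obtain ⟨p, hp, hq'⟩ := Multiset.mem_bind.mp h
        rw [Multiset.eq_of_mem_replicate hq']
        exact hup p hp
    · rw [Multiset.card_add, Multiset.card_bind]
      simp only [Function.comp, Multiset.card_replicate]
      rw [Multiset.map_id', husum]
    · rw [rsum_add, rsum_bind_replicate h2 hup, hucard]
      ring

lemma nat_mem_MP {P : Set ℕ} (h2 : ∀ p ∈ P, 2 ≤ p) {p₀ : ℕ} (hp₀ : p₀ ∈ P) (n : ℕ) :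
    (n : ℚ) ∈ MP P := by
  have hp2 := h2 p₀ hp₀
  apply mem_MP_iff.mpr
  refine ⟨Multiset.replicate (n * p₀) p₀, ?_, rsum_nat_mul n p₀ (by omega)⟩
  intro q hq
  rw [Multiset.eq_of_mem_replicate hq]
  exact hp₀

end Stmt8Aux

theorem stmt8 (P : Set ℕ) (hinf : P.Infinite) (h2 : ∀ p ∈ P, 2 ≤ p)
    (hcop : ∀ p ∈ P, ∀ q ∈ P, p ≠ q → Nat.Coprime p q) :
    {S : Set ℕ | ∃ q ∈ MP P, S = LengthSet (MP P) q} =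
      {S : Set ℕ | ∃ m n : ℕ, S = {x | ∃ k ∈ nfoldSumset P n, x = m + k}} := by
  open Stmt8Aux in
  ext S
  simp only [Set.mem_setOf_eq]
  constructor
  · rintro ⟨q, hq, rfl⟩
    obtain ⟨s, hg, rfl⟩ := mem_MP_iff.mp hq
    obtain ⟨c, u, hgc, hgu, hcr, hr, _⟩ :=
      decomp h2 (Multiset.card s) s le_rfl hg
    refine ⟨Multiset.card c, Multiset.card u, ?_⟩
    rw [hr, lengthSet_eq h2 hcop hgc hcr]
  · rintro ⟨m, n, rfl⟩
    obtain ⟨F, hFP, hFcard⟩ := hinf.exists_subset_card_eq m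
    set c : Multiset ℕ := F.val with hcdef
    have hgc : Good P c := fun p hp => hFP (by exact_mod_cast hp)
    have hcr : ∀ p ∈ P, c.count p < p := by
      intro p hp
      have hnd : c.Nodup := F.nodup
      have := (Multiset.nodup_iff_count_le_one.mp hnd) p
      have := h2 p hp
      omega
    have hccard : Multiset.card c = m := hFcard
    obtain ⟨p₀, hp₀⟩ := hinf.nonempty
    refine ⟨(n : ℚ) + rsum c, add_mem (nat_mem_MP h2 hp₀ n) (mem_MP_of_good hgc), ?_⟩
    rw [lengthSet_eq h2 hcop hgc hcr, hccard]
end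

section
/- For an element q = N(q) + Σ_{p∈P} c_p(1/p) of M_P written in canonical form (with N(q) ∈ ℕ₀ and c_p ∈ {0,…,p−1} almost all zero), the length set of q in M_P is L(q) = s_q + N(q)·P, where s_q = Σ_{p∈P} c_p and N(q)·P is the N(q)-fold sumset of P. -/
lemma mem_MP_iff {P : Set ℕ} {x : ℚ} :
    x ∈ MP P ↔ ∃ s : Multiset ℕ, (∀ p ∈ s, p ∈ P) ∧ (s.map fun p : ℕ => 1/(p:ℚ)).sum = x := by
  constructor
  · intro hx
    obtain ⟨l, hl, hsum⟩ := AddSubmonoid.exists_multiset_of_mem_closure hx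
    have hex : ∀ y ∈ l, ∃ p, p ∈ P ∧ y = 1/(p:ℚ) := by
      intro y hy; obtain ⟨p, hp, rfl⟩ := hl y hy; exact ⟨p, hp, rfl⟩
    classical
    set g : ℚ → ℕ := fun y => if h : ∃ p, p ∈ P ∧ y = 1/(p:ℚ) then h.choose else 0 with hg
    refine ⟨l.map g, ?_, ?_⟩
    · intro p hp
      obtain ⟨y, hy, rfl⟩ := Multiset.mem_map.mp hp
      have h := hex y hy
      simp only [hg, dif_pos h]
      exact h.choose_spec.1
    · have : Multiset.map (fun p : ℕ => 1/(p:ℚ)) (Multiset.map g l) = Multiset.map id l := by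
        rw [Multiset.map_map]
        apply Multiset.map_congr rfl
        intro y hy
        have h := hex y hy
        simp only [Function.comp, hg, dif_pos h, id]
        exact h.choose_spec.2.symm
      rw [this, Multiset.map_id]
      exact hsum
  · rintro ⟨s, hs, rfl⟩
    refine AddSubmonoid.multiset_sum_mem _ _ ?_
    intro y hy
    obtain ⟨p, hp, hpe⟩ := Multiset.mem_map.mp hy
    exact AddSubmonoid.subset_closure ⟨p, hs p hp, hpe.symm⟩


lemma key (P : Set ℕ) (h2 : ∀ p ∈ P, 2 ≤ p)
    (hcop : ∀ p ∈ P, ∀ q ∈ P, p ≠ q → Nat.Coprime p q)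
    (S : Finset ℕ) (hSP : ∀ p ∈ S, p ∈ P)
    (m c : ℕ → ℕ) (hlt : ∀ p ∈ S, c p < p) (N : ℕ)
    (heq : ∑ p ∈ S, (m p : ℚ)/p = N + ∑ p ∈ S, (c p : ℚ)/p) :
    (∀ p ∈ S, c p ≤ m p ∧ p ∣ (m p - c p)) ∧ ∑ p ∈ S, (m p - c p)/p = N := by
  have hpos : ∀ p ∈ S, 0 < p := fun p hp => lt_of_lt_of_le two_pos (h2 p (hSP p hp))
  have hL : ∀ p ∈ S, (p : ℚ) ≠ 0 := fun p hp => by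
    exact_mod_cast (hpos p hp).ne'
  have keyf : ∀ (f : ℕ → ℕ), ((∑ p ∈ S, f p * ∏ r ∈ S.erase p, r : ℕ) : ℚ)
      = (∑ p ∈ S, (f p : ℚ)/p) * ∏ r ∈ S, (r:ℚ) := by
    intro f
    push_cast
    rw [Finset.sum_mul]
    apply Finset.sum_congr rfl
    intro p hp
    rw [← Finset.mul_prod_erase S (fun r => (r:ℚ)) hp]
    have := hL p hp
    field_simp
  have hnat : ∑ p ∈ S, m p * ∏ r ∈ S.erase p, r
      = N * ∏ r ∈ S, r + ∑ p ∈ S, c p * ∏ r ∈ S.erase p, r := by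
    have hc : ((∑ p ∈ S, m p * ∏ r ∈ S.erase p, r : ℕ) : ℚ)
        = ((N * ∏ r ∈ S, r + ∑ p ∈ S, c p * ∏ r ∈ S.erase p, r : ℕ) : ℚ) := by
      rw [keyf m, heq, add_mul, Nat.cast_add, Nat.cast_mul, Nat.cast_prod, keyf c]
    exact_mod_cast hc
  have hmod : ∀ p ∈ S, m p % p = c p % p := by
    intro p hp
    obtain ⟨d, hd⟩ : p ∣ ∑ r ∈ S.erase p, m r * ∏ r' ∈ S.erase r, r' := by
      apply Finset.dvd_sum
      intro r hr
      have hrp : r ≠ p := (Finset.mem_erase.mp hr).1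
      exact Dvd.dvd.mul_left
        (Finset.dvd_prod_of_mem _ (Finset.mem_erase.mpr ⟨Ne.symm hrp, hp⟩)) _
    obtain ⟨e, he⟩ : p ∣ N * ∏ r ∈ S, r + ∑ r ∈ S.erase p, c r * ∏ r' ∈ S.erase r, r' := by
      apply dvd_add
      · exact Dvd.dvd.mul_left (Finset.dvd_prod_of_mem _ hp) _
      · apply Finset.dvd_sum
        intro r hr
        have hrp : r ≠ p := (Finset.mem_erase.mp hr).1
        exact Dvd.dvd.mul_left
          (Finset.dvd_prod_of_mem _ (Finset.mem_erase.mpr ⟨Ne.symm hrp, hp⟩)) _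
    have h1 : ∑ p' ∈ S, m p' * ∏ r ∈ S.erase p', r
        = m p * ∏ r ∈ S.erase p, r + ∑ r ∈ S.erase p, m r * ∏ r' ∈ S.erase r, r' :=
      (Finset.add_sum_erase S (fun p' => m p' * ∏ r ∈ S.erase p', r) hp).symm
    have h2' : ∑ p' ∈ S, c p' * ∏ r ∈ S.erase p', r
        = c p * ∏ r ∈ S.erase p, r + ∑ r ∈ S.erase p, c r * ∏ r' ∈ S.erase r, r' :=
      (Finset.add_sum_erase S (fun p' => c p' * ∏ r ∈ S.erase p', r) hp).symm
    have hsplit : m p * ∏ r ∈ S.erase p, r + p * d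
        = c p * ∏ r ∈ S.erase p, r + p * e := by
      rw [h1, h2', hd] at hnat
      omega
    have hme : m p * ∏ r ∈ S.erase p, r ≡ c p * ∏ r ∈ S.erase p, r [MOD p] := by
      have ha : (m p * ∏ r ∈ S.erase p, r + p * d) % p = (m p * ∏ r ∈ S.erase p, r) % p :=
        Nat.add_mul_mod_self_left _ _ _
      have hb : (c p * ∏ r ∈ S.erase p, r + p * e) % p = (c p * ∏ r ∈ S.erase p, r) % p :=
        Nat.add_mul_mod_self_left _ _ _
      unfold Nat.ModEq
      rw [← ha, ← hb, hsplit]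
    have hcopK : Nat.gcd p (∏ r ∈ S.erase p, r) = 1 := by
      apply Nat.Coprime.prod_right
      intro r hr
      exact hcop p (hSP p hp) r (hSP r (Finset.mem_of_mem_erase hr))
        (Ne.symm (Finset.mem_erase.mp hr).1)
    exact Nat.ModEq.cancel_right_of_coprime hcopK hme
  have hle : ∀ p ∈ S, c p ≤ m p ∧ p ∣ (m p - c p) := by
    intro p hp
    have h1 := hmod p hp
    have h2 : c p % p = c p := Nat.mod_eq_of_lt (hlt p hp)
    have h3 : m p % p ≤ m p := Nat.mod_le _ _
    have h4 := Nat.div_add_mod (m p) p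
    exact ⟨by omega, ⟨m p / p, by omega⟩⟩
  refine ⟨hle, ?_⟩
  have hcast : ((∑ p ∈ S, (m p - c p)/p : ℕ) : ℚ) = (N : ℚ) := by
    push_cast
    have hco : ∀ p ∈ S, (((m p - c p)/p : ℕ) : ℚ) = (m p : ℚ)/p - (c p : ℚ)/p := by
      intro p hp
      obtain ⟨hle', hdvd⟩ := hle p hp
      rw [Nat.cast_div hdvd (hL p hp), Nat.cast_sub hle']
      ring
    rw [Finset.sum_congr rfl hco, Finset.sum_sub_distrib]
    linarith [heq]
  exact_mod_cast hcast

lemma map_inv_sum_eq (s : Multiset ℕ) (S : Finset ℕ) (hS : ∀ p ∈ s, p ∈ S) :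
    (s.map fun p : ℕ => 1/(p:ℚ)).sum = ∑ p ∈ S, (s.count p : ℚ)/p := by
  classical
  rw [Finset.sum_multiset_map_count]
  rw [Finset.sum_subset (fun p hp => hS p (Multiset.mem_toFinset.mp hp))
    (fun p _ hp => by
      rw [Multiset.count_eq_zero_of_notMem (fun h => hp (Multiset.mem_toFinset.mpr h))]
      simp)]
  apply Finset.sum_congr rfl
  intro p _
  rw [nsmul_eq_mul]
  ring

lemma map_inv_sum_pos {P : Set ℕ} (h2 : ∀ p ∈ P, 2 ≤ p) (s : Multiset ℕ)
    (hs : ∀ p ∈ s, p ∈ P) (hne : s ≠ 0) : 0 < (s.map fun p : ℕ => 1/(p:ℚ)).sum := by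
  obtain ⟨r, hr⟩ := Multiset.exists_mem_of_ne_zero hne
  have hnonneg : ∀ x ∈ s.map fun p : ℕ => 1/(p:ℚ), 0 ≤ x := by
    intro x hx
    obtain ⟨p, hp, rfl⟩ := Multiset.mem_map.mp hx
    positivity
  have h1r : (0:ℚ) < 1/(r:ℚ) := by
    have : (2:ℚ) ≤ r := by exact_mod_cast h2 r (hs r hr)
    positivity
  exact lt_of_lt_of_le h1r (Multiset.single_le_sum hnonneg _
    (Multiset.mem_map_of_mem _ hr))

lemma isAtom_iff {P : Set ℕ} (h2 : ∀ p ∈ P, 2 ≤ p)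
    (hcop : ∀ p ∈ P, ∀ q ∈ P, p ≠ q → Nat.Coprime p q) (a : ℚ) :
    IsAtomOf (MP P) a ↔ ∃ p ∈ P, a = 1/(p:ℚ) := by
  classical
  constructor
  · rintro ⟨hmem, hne, hsplit⟩
    obtain ⟨s, hsP, hsum⟩ := mem_MP_iff.mp hmem
    have hs0 : s ≠ 0 := by
      rintro rfl
      simp at hsum
      exact hne hsum.symm
    obtain ⟨r, hr⟩ := Multiset.exists_mem_of_ne_zero hs0
    obtain ⟨s', rfl⟩ := Multiset.exists_cons_of_mem hr
    rcases eq_or_ne s' 0 with rfl | hs'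
    · refine ⟨r, hsP r (Multiset.mem_cons_self r 0), ?_⟩
      rw [one_div, ← hsum]
      simp
    · exfalso
      have hb : (1/(r:ℚ)) ∈ MP P :=
        AddSubmonoid.subset_closure ⟨r, hsP r (Multiset.mem_cons_self r s'), rfl⟩
      have hc : (s'.map fun p : ℕ => 1/(p:ℚ)).sum ∈ MP P :=
        mem_MP_iff.mpr ⟨s', fun p hp => hsP p (Multiset.mem_cons_of_mem hp), rfl⟩
      have hadd : 1/(r:ℚ) + (s'.map fun p : ℕ => 1/(p:ℚ)).sum = a := by
        rw [← hsum, Multiset.map_cons, Multiset.sum_cons]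
      rcases hsplit _ hb _ hc hadd with h | h
      · have : (2:ℚ) ≤ r := by exact_mod_cast h2 r (hsP r (Multiset.mem_cons_self r s'))
        have : (0:ℚ) < 1/(r:ℚ) := by positivity
        exact this.ne' h
      · exact (map_inv_sum_pos h2 s'
          (fun p hp => hsP p (Multiset.mem_cons_of_mem hp)) hs').ne' h
  · rintro ⟨p, hp, rfl⟩
    have hp2 : (2:ℚ) ≤ p := by exact_mod_cast h2 p hp
    refine ⟨AddSubmonoid.subset_closure ⟨p, hp, rfl⟩, by positivity, ?_⟩
    intro b hb c hc hbc
    obtain ⟨sb, hsb, hb'⟩ := mem_MP_iff.mp hb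
    obtain ⟨sc, hsc, hc'⟩ := mem_MP_iff.mp hc
    set v := sb + sc with hv
    have hvP : ∀ r ∈ v, r ∈ P := by
      intro r hr
      rcases Multiset.mem_add.mp hr with h | h
      · exact hsb r h
      · exact hsc r h
    set S : Finset ℕ := v.toFinset ∪ {p} with hSdef
    have hSP : ∀ r ∈ S, r ∈ P := by
      intro r hr
      rcases Finset.mem_union.mp hr with h | h
      · exact hvP r (Multiset.mem_toFinset.mp h)
      · rw [Finset.mem_singleton.mp h]; exact hp
    set c' : ℕ → ℕ := fun r => if r = p then 1 else 0 with hc'def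
    have hpS : p ∈ S := Finset.mem_union_right _ (Finset.mem_singleton_self p)
    have heq : ∑ r ∈ S, (v.count r : ℚ)/r = (0:ℕ) + ∑ r ∈ S, (c' r : ℚ)/r := by
      rw [← map_inv_sum_eq v S (fun r hr => Finset.mem_union_left _ (Multiset.mem_toFinset.mpr hr))]
      have hrhs : ∑ r ∈ S, (c' r : ℚ)/r = 1/(p:ℚ) := by
        rw [Finset.sum_eq_single p]
        · simp [hc'def]
        · intro r _ hrp
          simp [hc'def, hrp]
        · intro h; exact absurd hpS h
      rw [hrhs, Multiset.map_add, Multiset.sum_add, hb', hc', hbc]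
      simp
    have hlt' : ∀ r ∈ S, c' r < r := by
      intro r hr
      have := h2 r (hSP r hr)
      by_cases h : r = p <;> simp [hc'def, h] <;> omega
    obtain ⟨hdv, hsum0⟩ := key P h2 hcop S hSP (fun r => v.count r) c' hlt' 0 heq
    have hzero : ∀ r ∈ S, v.count r = c' r := by
      intro r hr
      have ht : (v.count r - c' r)/r = 0 :=
        (Finset.sum_eq_zero_iff.mp hsum0) r hr
      obtain ⟨hle, hdvd⟩ := hdv r hr
      have hr2 := h2 r (hSP r hr)
      have hmc := Nat.div_mul_cancel hdvd
      rw [ht] at hmc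
      omega
    have hcount : ∀ r : ℕ, v.count r = c' r := by
      intro r
      by_cases h : r ∈ S
      · exact hzero r h
      · have h1 : v.count r = 0 := Multiset.count_eq_zero_of_notMem
          (fun hm => h (Finset.mem_union_left _ (Multiset.mem_toFinset.mpr hm)))
        have h2' : c' r = 0 := by
          simp only [hc'def, if_neg (fun hrp : r = p => h (hrp ▸ hpS))]
        omega
    have hcp : sb.count p + sc.count p = 1 := by
      simpa [hv, hc'def, Multiset.count_add] using hcount p
    have hother : ∀ r, r ≠ p → sb.count r = 0 ∧ sc.count r = 0 := by
      intro r hrp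
      have := hcount r
      simp only [hc'def, if_neg hrp, hv, Multiset.count_add] at this
      omega
    rcases Nat.add_eq_one_iff.mp hcp with ⟨h1, h2'⟩ | ⟨h1, h2'⟩
    · left
      have : sb = 0 := by
        ext r
        simp only [Multiset.count_zero]
        by_cases h : r = p
        · rw [h]; exact h1
        · exact (hother r h).1
      rw [← hb', this]
      simp
    · right
      have : sc = 0 := by
        ext r
        simp only [Multiset.count_zero]
        by_cases h : r = p
        · rw [h]; exact h2'
        · exact (hother r h).2
      rw [← hc', this]
      simp

lemma card_finset_sum {ι α : Type*} (S : Finset ι) (f : ι → Multiset α) :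
    Multiset.card (∑ i ∈ S, f i) = ∑ i ∈ S, Multiset.card (f i) := by
  classical
  induction S using Finset.cons_induction with
  | empty => simp
  | cons a s ha ih => simp [Finset.sum_cons, ih]

lemma sum_finset_sum {ι α : Type*} [AddCommMonoid α] (S : Finset ι) (f : ι → Multiset α) :
    (∑ i ∈ S, f i).sum = ∑ i ∈ S, (f i).sum := by
  classical
  induction S using Finset.cons_induction with
  | empty => simp
  | cons a s ha ih => rw [Finset.sum_cons, Finset.sum_cons, Multiset.sum_add, ih]

theorem stmt9 (P : Set ℕ) (hinf : P.Infinite) (h2 : ∀ p ∈ P, 2 ≤ p)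
    (hcop : ∀ p ∈ P, ∀ q ∈ P, p ≠ q → Nat.Coprime p q)
    (q : ℚ) (Nq : ℕ) (c : ℕ →₀ ℕ)
    (hsupp : ∀ p : ℕ, c p ≠ 0 → p ∈ P) (hlt : ∀ p ∈ P, c p < p)
    (hdec : q = (Nq : ℚ) + c.sum (fun p k => (k : ℚ) / (p : ℚ))) :
    LengthSet (MP P) q =
      {x | ∃ k ∈ nfoldSumset P Nq, x = (c.sum fun _ k => k) + k} := by
  classical
  ext ℓ
  simp only [LengthSet, nfoldSumset, Set.mem_setOf_eq]
  constructor
  · rintro ⟨s, hcard, hatoms, hsum⟩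
    -- turn s into a multiset of naturals
    have hex : ∀ a ∈ s, ∃ p, p ∈ P ∧ a = 1/(p:ℚ) := by
      intro a ha
      obtain ⟨p, hp, hpe⟩ := (isAtom_iff h2 hcop a).mp (hatoms a ha)
      exact ⟨p, hp, hpe⟩
    set g : ℚ → ℕ := fun y => if h : ∃ p, p ∈ P ∧ y = 1/(p:ℚ) then h.choose else 0 with hg
    set u : Multiset ℕ := s.map g with hu
    have huP : ∀ p ∈ u, p ∈ P := by
      intro p hp
      obtain ⟨y, hy, rfl⟩ := Multiset.mem_map.mp hp
      have h := hex y hy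
      simp only [hg, dif_pos h]
      exact h.choose_spec.1
    have husum : (u.map fun p : ℕ => 1/(p:ℚ)).sum = q := by
      have : Multiset.map (fun p : ℕ => 1/(p:ℚ)) (Multiset.map g s) = Multiset.map id s := by
        rw [Multiset.map_map]
        apply Multiset.map_congr rfl
        intro y hy
        have h := hex y hy
        simp only [Function.comp, hg, dif_pos h, id]
        exact h.choose_spec.2.symm
      rw [hu, this, Multiset.map_id, hsum]
    have hucard : Multiset.card u = ℓ := by rw [hu, Multiset.card_map, hcard]
    set S : Finset ℕ := u.toFinset ∪ c.support with hS
    have hSP : ∀ r ∈ S, r ∈ P := by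
      intro r hr
      rcases Finset.mem_union.mp hr with h | h
      · exact huP r (Multiset.mem_toFinset.mp h)
      · exact hsupp r (Finsupp.mem_support_iff.mp h)
    have hcsum : c.sum (fun p k => (k : ℚ) / (p : ℚ)) = ∑ r ∈ S, (c r : ℚ)/r :=
      Finsupp.sum_of_support_subset c (Finset.subset_union_right) _ (by intros; simp)
    have heq : ∑ r ∈ S, (u.count r : ℚ)/r = Nq + ∑ r ∈ S, (c r : ℚ)/r := by
      rw [← map_inv_sum_eq u S
        (fun r hr => Finset.mem_union_left _ (Multiset.mem_toFinset.mpr hr)),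
        husum, hdec, hcsum]
    obtain ⟨hdv, hsumN⟩ := key P h2 hcop S hSP (fun r => u.count r) (fun r => c r)
      (fun r hr => hlt r (hSP r hr)) Nq heq
    set t : ℕ → ℕ := fun r => (u.count r - c r)/r with ht
    set w : Multiset ℕ := ∑ r ∈ S, Multiset.replicate (t r) r with hw
    have hwcard : Multiset.card w = Nq := by
      rw [hw, card_finset_sum]
      simpa [Multiset.card_replicate] using hsumN
    have hwP : ∀ a ∈ w, a ∈ P := by
      intro a ha
      rw [hw] at ha
      obtain ⟨r, hr, ha'⟩ := Multiset.mem_sum.mp ha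
      rw [Multiset.eq_of_mem_replicate ha']
      exact hSP r hr
    refine ⟨w.sum, ⟨w, hwcard, hwP, rfl⟩, ?_⟩
    have hcount : ∀ r ∈ S, u.count r = c r + t r * r := by
      intro r hr
      obtain ⟨hle, hdvd⟩ := hdv r hr
      have := Nat.div_mul_cancel hdvd
      simp only [ht]
      omega
    have hwsum : w.sum = ∑ r ∈ S, t r * r := by
      rw [hw, sum_finset_sum]
      apply Finset.sum_congr rfl
      intro r _
      rw [Multiset.sum_replicate, smul_eq_mul]
    have hcsum2 : (c.sum fun _ k => k) = ∑ r ∈ S, c r :=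
      Finsupp.sum_of_support_subset c (Finset.subset_union_right) _ (by intros; rfl)
    rw [← hucard, ← Multiset.sum_count_eq_card (s := S) (fun a ha =>
      Finset.mem_union_left _ (Multiset.mem_toFinset.mpr ha)), hwsum, hcsum2,
      ← Finset.sum_add_distrib]
    exact Finset.sum_congr rfl hcount
  · rintro ⟨k, ⟨s, hscard, hsP, hssum⟩, hx⟩
    set A : Multiset ℚ := (∑ p ∈ c.support, Multiset.replicate (c p) (1/(p:ℚ)))
      + s.bind (fun p => Multiset.replicate p (1/(p:ℚ))) with hA
    refine ⟨A, ?_, ?_, ?_⟩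
    · rw [hA, Multiset.card_add, card_finset_sum, Multiset.card_bind]
      have h1 : ∑ p ∈ c.support, Multiset.card (Multiset.replicate (c p) (1/(p:ℚ)))
          = c.sum fun _ k => k := by
        simp [Multiset.card_replicate, Finsupp.sum]
      have h2' : (s.map (Multiset.card ∘ fun p => Multiset.replicate p (1/(p:ℚ)))).sum = k := by
        have : (Multiset.card ∘ fun p : ℕ => Multiset.replicate p (1/(p:ℚ))) = id := by
          funext p; simp
        rw [this, Multiset.map_id, hssum]
      rw [h1, h2', hx]
    · intro a ha
      rw [hA, Multiset.mem_add] at ha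
      rcases ha with h | h
      · obtain ⟨p, hp, ha'⟩ := Multiset.mem_sum.mp h
        rw [Multiset.eq_of_mem_replicate ha']
        exact (isAtom_iff h2 hcop _).mpr ⟨p, hsupp p (Finsupp.mem_support_iff.mp hp), rfl⟩
      · obtain ⟨p, hp, ha'⟩ := Multiset.mem_bind.mp h
        rw [Multiset.eq_of_mem_replicate ha']
        exact (isAtom_iff h2 hcop _).mpr ⟨p, hsP p hp, rfl⟩
    · rw [hA, Multiset.sum_add, sum_finset_sum, Multiset.sum_bind]
      have h1 : ∑ p ∈ c.support, (Multiset.replicate (c p) (1/(p:ℚ))).sum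
          = c.sum fun p k => (k : ℚ)/p := by
        apply Finset.sum_congr rfl
        intro p _
        rw [Multiset.sum_replicate, nsmul_eq_mul]
        ring
      have h2' : (s.map fun p => (Multiset.replicate p (1/(p:ℚ))).sum).sum = (Nq : ℚ) := by
        have hmc : Multiset.map (fun p => (Multiset.replicate p (1/(p:ℚ))).sum) s
            = Multiset.map (fun _ => (1:ℚ)) s := by
          apply Multiset.map_congr rfl
          intro p hp
          rw [Multiset.sum_replicate, nsmul_eq_mul]
          have hp0 : (p:ℚ) ≠ 0 := by
            have := h2 p (hsP p hp)
            positivity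
          field_simp
        rw [hmc, Multiset.map_const', Multiset.sum_replicate, hscard]
        simp
      rw [h1, h2', hdec]
      ring
end

section
/- For every finite nonempty subset L ⊆ ℕ_{≥2}, there exist a numerical monoid M and an element m ∈ M such that the length set of m in M equals L. -/
/-!
Let `T = max L`, `B = T + 2` and `n = B ^ (T + 2)`. Take as generators `n`,
`c ℓ = (T + 1 - ℓ) n + B ^ ℓ` and `d ℓ = n + (B ^ (T + 1) - B ^ ℓ)` for `ℓ ∈ L`, together with
every integer above `m = T n + B ^ (T + 1)`; the latter make the monoid cofinite without touching
factorizations of elements `≤ m`. Since `(ℓ - 2) n + c ℓ + d ℓ = m`, every `ℓ ∈ L` is a length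
of `m`. Conversely, split a sum of generators into a weight (its multiple of `n`) and a residue:
a factorization of `m` has at most `T` factors, so no carries occur, the residues add up to
`B ^ (T + 1)` exactly, and comparing base-`B` digits forces exactly one `c ℓ` and one `d ℓ`,
with the same `ℓ`; the weight then forces `ℓ - 2` copies of `n`. The same digit count shows that
each `c ℓ` is an atom, while `n` and `d ℓ` are atoms because they are below `2 n`.
-/

open Multiset

def factorizationLengths {α : Type*} [AddCommMonoid α] (S : Set α) (z : α) : Set ℕ :=
  {ℓ | ∃ s : Multiset α, card s = ℓ ∧ (∀ a ∈ s, a ∈ S) ∧ s.sum = z}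

theorem IsAtomOf.mem_of_closure {α : Type*} [AddCommMonoid α] {X : Set α} {a : α}
    (ha : IsAtomOf (AddSubmonoid.closure X) a) : a ∈ X := by
  obtain ⟨s, hsX, hsum⟩ := AddSubmonoid.exists_multiset_of_mem_closure ha.1
  induction s using Multiset.induction generalizing a with
  | empty => exact absurd hsum.symm ha.2.1
  | cons b t ih =>
    have hb : b ∈ X := hsX b (mem_cons_self b t)
    have ht : ∀ y ∈ t, y ∈ X := fun y hy => hsX y (mem_cons_of_mem hy)
    rw [sum_cons] at hsum
    rcases ha.2.2 b (AddSubmonoid.subset_closure hb) t.sum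
        (AddSubmonoid.multiset_sum_mem _ _ fun y hy => AddSubmonoid.subset_closure (ht y hy))
        hsum with hb0 | ht0
    · rw [hb0, zero_add] at hsum
      exact ih (hsum ▸ ha) ht hsum
    · rwa [← hsum, ht0, add_zero]

def closureIoi (S : Set ℕ) (m : ℕ) : AddSubmonoid ℕ :=
  AddSubmonoid.closure (S ∪ Set.Ioi m)

section closureIoi

variable {S : Set ℕ} {m : ℕ}

theorem finite_compl_closureIoi : {n : ℕ | n ∉ closureIoi S m}.Finite :=
  (Set.finite_Iic m).subset fun n hn => by
    by_contra hlt
    exact hn (AddSubmonoid.subset_closure (Or.inr (show m < n from not_le.mp hlt)))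

theorem mem_closureIoi_of_mem_factorizationLengths {ℓ z : ℕ}
    (h : ℓ ∈ factorizationLengths S z) : z ∈ closureIoi S m := by
  obtain ⟨s, -, hs, rfl⟩ := h
  exact AddSubmonoid.multiset_sum_mem _ _ fun a ha => AddSubmonoid.subset_closure (Or.inl (hs a ha))

theorem exists_multiset_of_mem_closureIoi {z : ℕ} (hz : z ∈ closureIoi S m) (hzm : z ≤ m) :
    ∃ s : Multiset ℕ, (∀ a ∈ s, a ∈ S) ∧ s.sum = z := by
  obtain ⟨s, hs, rfl⟩ := AddSubmonoid.exists_multiset_of_mem_closure hz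
  refine ⟨s, fun a ha => (hs a ha).resolve_right fun ham => ?_, rfl⟩
  exact absurd ((le_sum_of_mem ha).trans hzm) (not_le.mpr ham)

theorem isAtomOf_closureIoi {a : ℕ} (ha : a ∈ S) (ham : a ≤ m)
    (h : factorizationLengths S a ⊆ {1}) : IsAtomOf (closureIoi S m) a := by
  refine ⟨AddSubmonoid.subset_closure (Or.inl ha), fun ha0 => ?_, fun b hb c hc hbc => ?_⟩
  · exact absurd (h ⟨0, rfl, by simp, by simp [ha0]⟩) (by simp)
  obtain ⟨sb, hsb, rfl⟩ := exists_multiset_of_mem_closureIoi hb (by omega)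
  obtain ⟨sc, hsc, rfl⟩ := exists_multiset_of_mem_closureIoi hc (by omega)
  have hcard : card (sb + sc) = 1 :=
    h ⟨sb + sc, rfl, fun x hx => (mem_add.mp hx).elim (hsb x) (hsc x), by rw [sum_add, hbc]⟩
  rw [card_add] at hcard
  rcases Nat.add_eq_one_iff.mp hcard with ⟨hb0, -⟩ | ⟨-, hc0⟩
  · exact Or.inl (by rw [card_eq_zero.mp hb0, sum_zero])
  · exact Or.inr (by rw [card_eq_zero.mp hc0, sum_zero])

theorem lengthSet_closureIoi (hS : ∀ a ∈ S, IsAtomOf (closureIoi S m) a) :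
    LengthSet (closureIoi S m) m = factorizationLengths S m := by
  ext ℓ
  refine ⟨fun ⟨s, hcard, hs, hsum⟩ => ⟨s, hcard, fun a ha => ?_, hsum⟩,
    fun ⟨s, hcard, hs, hsum⟩ => ⟨s, hcard, fun a ha => hS a (hs a ha), hsum⟩⟩
  refine (IsAtomOf.mem_of_closure (hs a ha)).resolve_right fun ham => ?_
  exact absurd (hsum ▸ le_sum_of_mem ha) (not_le.mpr ham)

end closureIoi

theorem factorizationLengths_subset_one_of_lt {S : Set ℕ} {n z : ℕ} (hS : ∀ a ∈ S, n ≤ a)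
    (hz0 : z ≠ 0) (hz : z < 2 * n) : factorizationLengths S z ⊆ {1} := by
  rintro _ ⟨s, rfl, hs, rfl⟩
  have hle : card s * n ≤ s.sum := by
    simpa using card_nsmul_le_sum fun a ha => hS a (hs a ha)
  have hs0 : card s ≠ 0 := fun h => hz0 (by rw [card_eq_zero.mp h, sum_zero])
  have : card s < 2 := lt_of_mul_lt_mul_right (hle.trans_lt hz) n.zero_le
  simp only [Set.mem_singleton_iff]
  omega

theorem eq_and_eq_of_mul_add_eq_mul_add {n q r q' r' : ℕ} (hr : r < n) (hr' : r' < n)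
    (h : q * n + r = q' * n + r') : q = q' ∧ r = r' := by
  have hdivmod : ∀ q r, r < n → (q * n + r) / n = q ∧ (q * n + r) % n = r := fun q r hr =>
    (Nat.div_mod_unique (by omega)).mpr ⟨by ring, hr⟩
  obtain ⟨hq, hr⟩ := hdivmod q r hr
  obtain ⟨hq', hr'⟩ := hdivmod q' r' hr'
  rw [h] at hq hr
  exact ⟨hq.symm.trans hq', hr.symm.trans hr'⟩

section Digits

variable {B : ℕ}

theorem sum_map_pow_lt_pow_succ {T : ℕ} {u : Multiset ℕ} (hu : ∀ ℓ ∈ u, ℓ ≤ T)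
    (hcard : card u < B) : (u.map (B ^ ·)).sum < B ^ (T + 1) := by
  have hB : 0 < B := by omega
  calc (u.map (B ^ ·)).sum ≤ card u * B ^ T := by
        simpa using sum_le_card_nsmul (u.map (B ^ ·)) (B ^ T) (by
          simp only [mem_map]
          rintro _ ⟨ℓ, hℓ, rfl⟩
          exact Nat.pow_le_pow_right hB (hu ℓ hℓ))
    _ < B * B ^ T := Nat.mul_lt_mul_of_pos_right hcard (by positivity)
    _ = B ^ (T + 1) := by ring

/-- Having fewer than `B` summands, the sum lies in `[B ^ a, B ^ (a + 1))` for its largest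
exponent `a`. -/
theorem eq_singleton_of_sum_map_pow_eq_pow {q : ℕ} {u : Multiset ℕ} (hB : 1 < B)
    (hcard : card u < B) (h : (u.map (B ^ ·)).sum = B ^ q) : u = {q} := by
  have hu0 : u ≠ 0 := by
    rintro rfl
    exact (pow_pos (by omega : 0 < B) q).ne (by simpa using h)
  obtain ⟨a, ha, hmax⟩ := exists_max_image id hu0
  have hq_lt : q < a + 1 := by
    rw [← Nat.pow_lt_pow_iff_right hB, ← h]
    exact sum_map_pow_lt_pow_succ hmax hcard
  obtain ⟨t, rfl⟩ := exists_cons_of_mem ha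
  rw [map_cons, sum_cons] at h
  have haq : a ≤ q := (Nat.pow_le_pow_iff_right hB).mp (h ▸ Nat.le_add_right _ _)
  obtain rfl : a = q := by omega
  have ht : (t.map (B ^ ·)).sum = 0 := by omega
  rw [sum_eq_zero_iff] at ht
  rw [eq_zero_of_forall_notMem fun b hb =>
    (pow_pos (by omega) b).ne' (ht _ (mem_map_of_mem _ hb))]
  rfl

theorem residue_eq_cases {T p : ℕ} {u v : Multiset ℕ} (hTB : T + 1 < B)
    (hu : ∀ ℓ ∈ u, ℓ ≤ T) (hv : ∀ ℓ ∈ v, ℓ ≤ T) (hcard : card u + card v ≤ T) (hp : p ≤ T + 1)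
    (h : (u.map (B ^ ·)).sum + card v * B ^ (T + 1) = B ^ p + (v.map (B ^ ·)).sum) :
    (p = T + 1 ∧ ∃ ℓ, u = {ℓ} ∧ v = {ℓ}) ∨ (p ≤ T ∧ u = {p} ∧ v = 0) := by
  have hB : 1 < B := by omega
  have hu_lt := sum_map_pow_lt_pow_succ hu (B := B) (by omega)
  rcases hp.eq_or_lt with rfl | hp
  · obtain ⟨hv1, huv⟩ := eq_and_eq_of_mul_add_eq_mul_add hu_lt
      (sum_map_pow_lt_pow_succ hv (B := B) (by omega))
      (show card v * B ^ (T + 1) + _ = 1 * B ^ (T + 1) + _ by linarith)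
    obtain ⟨ℓ, rfl⟩ := card_eq_one.mp hv1
    refine Or.inl ⟨rfl, ℓ, eq_singleton_of_sum_map_pow_eq_pow hB (by omega) ?_, rfl⟩
    simpa using huv
  · have hpv : ∀ ℓ ∈ p ::ₘ v, ℓ ≤ T := by
      simpa using ⟨by omega, hv⟩
    obtain ⟨hv0, hup⟩ := eq_and_eq_of_mul_add_eq_mul_add hu_lt
      (sum_map_pow_lt_pow_succ hpv (B := B) (by rw [card_cons]; omega))
      (show card v * B ^ (T + 1) + _ = 0 * B ^ (T + 1) + _ by
        simp only [zero_mul, map_cons, sum_cons, zero_add]; linarith)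
    obtain rfl := card_eq_zero.mp hv0
    exact Or.inr ⟨by omega, eq_singleton_of_sum_map_pow_eq_pow hB (by omega) (by simpa using hup),
      rfl⟩

end Digits

namespace LengthSetRealization

def cGen (T ℓ : ℕ) : ℕ := (T + 1 - ℓ) * (T + 2) ^ (T + 2) + (T + 2) ^ ℓ

def dGen (T ℓ : ℕ) : ℕ := (T + 2) ^ (T + 2) + ((T + 2) ^ (T + 1) - (T + 2) ^ ℓ)

def target (T : ℕ) : ℕ := T * (T + 2) ^ (T + 2) + (T + 2) ^ (T + 1)

def generators (L : Set ℕ) (T : ℕ) : Set ℕ :=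
  insert ((T + 2) ^ (T + 2)) (cGen T '' L ∪ dGen T '' L)

variable {L : Set ℕ} {T : ℕ}

theorem exists_eq_of_forall_mem_generators {s : Multiset ℕ}
    (hs : ∀ a ∈ s, a ∈ generators L T) :
    ∃ (x : ℕ) (u v : Multiset ℕ), (∀ ℓ ∈ u, ℓ ∈ L) ∧ (∀ ℓ ∈ v, ℓ ∈ L) ∧
      s = replicate x ((T + 2) ^ (T + 2)) + u.map (cGen T) + v.map (dGen T) := by
  induction s using Multiset.induction with
  | empty => exact ⟨0, 0, 0, by simp, by simp, by simp⟩
  | cons a s ih =>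
    obtain ⟨x, u, v, hu, hv, rfl⟩ := ih fun b hb => hs b (mem_cons_of_mem hb)
    rcases hs a (mem_cons_self a _) with rfl | ⟨ℓ, hℓ, rfl⟩ | ⟨ℓ, hℓ, rfl⟩
    · exact ⟨x + 1, u, v, hu, hv, by simp [replicate_succ]⟩
    · refine ⟨x, ℓ ::ₘ u, v, by simpa using ⟨hℓ, hu⟩, hv, by simp [add_comm, add_left_comm]⟩
    · refine ⟨x, u, ℓ ::ₘ v, hu, by simpa using ⟨hℓ, hv⟩, by simp [add_comm, add_left_comm]⟩

/-- Adding `∑ ℓ ∈ v, B ^ ℓ` cancels the truncated subtractions in `dGen`. -/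
theorem sum_generators_add (x : ℕ) (u : Multiset ℕ) {v : Multiset ℕ} (hv : ∀ ℓ ∈ v, ℓ ≤ T) :
    x * (T + 2) ^ (T + 2) + (u.map (cGen T)).sum + (v.map (dGen T)).sum
        + (v.map ((T + 2) ^ ·)).sum =
      (x + (u.map (T + 1 - ·)).sum + card v) * (T + 2) ^ (T + 2)
        + ((u.map ((T + 2) ^ ·)).sum + card v * (T + 2) ^ (T + 1)) := by
  have hd : (v.map (dGen T)).sum + (v.map ((T + 2) ^ ·)).sum =
      card v * ((T + 2) ^ (T + 2) + (T + 2) ^ (T + 1)) := by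
    rw [← sum_map_add, map_congr rfl fun ℓ hℓ => ?_, map_const', sum_replicate, smul_eq_mul]
    have : (T + 2) ^ ℓ ≤ (T + 2) ^ (T + 1) :=
      Nat.pow_le_pow_right (by omega) ((hv ℓ hℓ).trans T.le_succ)
    simp only [dGen]
    omega
  have hc : (u.map (cGen T)).sum =
      (u.map (T + 1 - ·)).sum * (T + 2) ^ (T + 2) + (u.map ((T + 2) ^ ·)).sum := by
    rw [← sum_map_mul_right, ← sum_map_add]
    rfl
  rw [hc, add_assoc _ (v.map (dGen T)).sum, hd]
  ring

theorem factorization_cases {x C p : ℕ} {u v : Multiset ℕ} (hu : ∀ ℓ ∈ u, ℓ ≤ T)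
    (hv : ∀ ℓ ∈ v, ℓ ≤ T) (hC : C ≤ T) (hp : p ≤ T + 1)
    (h : x * (T + 2) ^ (T + 2) + (u.map (cGen T)).sum + (v.map (dGen T)).sum =
      C * (T + 2) ^ (T + 2) + (T + 2) ^ p) :
    x + (u.map (T + 1 - ·)).sum + card v = C ∧
      ((p = T + 1 ∧ ∃ ℓ, u = {ℓ} ∧ v = {ℓ}) ∨ (p ≤ T ∧ u = {p} ∧ v = 0)) := by
  have hp_lt : (T + 2) ^ p < (T + 2) ^ (T + 2) := Nat.pow_lt_pow_right (by omega) (by omega)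
  have hcard : x + card u + card v ≤ C := by
    have hc : card u * (T + 2) ^ (T + 2) ≤ (u.map (cGen T)).sum := by
      simpa using card_nsmul_le_sum (s := u.map (cGen T)) fun a ha => by
        obtain ⟨ℓ, hℓ, rfl⟩ := mem_map.mp ha
        exact (Nat.le_mul_of_pos_left _ (by have := hu ℓ hℓ; omega)).trans (Nat.le_add_right _ _)
    have hd : card v * (T + 2) ^ (T + 2) ≤ (v.map (dGen T)).sum := by
      simpa using card_nsmul_le_sum (s := v.map (dGen T)) fun a ha => by
        obtain ⟨ℓ, -, rfl⟩ := mem_map.mp ha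
        exact Nat.le_add_right _ _
    have : (x + card u + card v) * (T + 2) ^ (T + 2) < (C + 1) * (T + 2) ^ (T + 2) := by
      nlinarith
    exact Nat.le_of_lt_succ (lt_of_mul_lt_mul_right this (Nat.zero_le _))
  have hR : (u.map ((T + 2) ^ ·)).sum + card v * (T + 2) ^ (T + 1) < (T + 2) ^ (T + 2) := by
    have hu_lt := sum_map_pow_lt_pow_succ hu (B := T + 2) (by omega)
    calc (u.map ((T + 2) ^ ·)).sum + card v * (T + 2) ^ (T + 1)
        < (card v + 1) * (T + 2) ^ (T + 1) := by linarith
      _ ≤ (T + 2) * (T + 2) ^ (T + 1) := Nat.mul_le_mul_right _ (by omega)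
      _ = (T + 2) ^ (T + 2) := by ring
  have hR' : (T + 2) ^ p + (v.map ((T + 2) ^ ·)).sum < (T + 2) ^ (T + 2) := by
    simpa using sum_map_pow_lt_pow_succ (u := p ::ₘ v) (T := T + 1) (B := T + 2)
      (by simpa using ⟨hp, fun ℓ hℓ => (hv ℓ hℓ).trans T.le_succ⟩)
      (by rw [card_cons]; omega)
  obtain ⟨hW, hdigits⟩ := eq_and_eq_of_mul_add_eq_mul_add hR hR' (by
    rw [← sum_generators_add x u hv, h]
    ring)
  exact ⟨hW, residue_eq_cases (by omega) hu hv (by omega) hp hdigits⟩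

theorem exists_card_sum_of_forall_mem_generators {s : Multiset ℕ} (hs : ∀ a ∈ s, a ∈ generators L T) :
    ∃ (x : ℕ) (u v : Multiset ℕ), (∀ ℓ ∈ u, ℓ ∈ L) ∧ (∀ ℓ ∈ v, ℓ ∈ L) ∧
      card s = x + card u + card v ∧
      s.sum = x * (T + 2) ^ (T + 2) + (u.map (cGen T)).sum + (v.map (dGen T)).sum := by
  obtain ⟨x, u, v, hu, hv, rfl⟩ := exists_eq_of_forall_mem_generators hs
  exact ⟨x, u, v, hu, hv, by simp, by simp [sum_replicate]⟩

theorem factorizationLengths_target (hL : L ⊆ Set.Icc 2 T) :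
    factorizationLengths (generators L T) (target T) = L := by
  ext ℓ
  constructor
  · rintro ⟨s, rfl, hs, hsum⟩
    obtain ⟨x, u, v, hu, hv, hcard, hsum'⟩ := exists_card_sum_of_forall_mem_generators hs
    have hle : ∀ w : Multiset ℕ, (∀ ℓ ∈ w, ℓ ∈ L) → ∀ ℓ ∈ w, ℓ ≤ T :=
      fun w hw ℓ hℓ => (hL (hw ℓ hℓ)).2
    obtain ⟨hW, ⟨-, ℓ, rfl, rfl⟩ | ⟨hp, -⟩⟩ := factorization_cases (C := T) (p := T + 1)
      (hle u hu) (hle v hv) le_rfl le_rfl (hsum' ▸ hsum)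
    · have hℓ := hL (hu ℓ (mem_singleton_self ℓ))
      simp only [Set.mem_Icc, card_singleton, map_singleton, sum_singleton] at hℓ hcard hW
      rw [hcard, show x + 1 + 1 = ℓ by omega]
      exact hu ℓ (mem_singleton_self ℓ)
    · omega
  · intro hℓ
    obtain ⟨hℓ2, hℓT⟩ := hL hℓ
    refine ⟨replicate (ℓ - 2) ((T + 2) ^ (T + 2)) + {cGen T ℓ, dGen T ℓ},
      by simp only [insert_eq_cons, card_add, card_cons, card_replicate, card_singleton]; omega,
      ?_, ?_⟩
    · simp only [mem_add, mem_replicate, Multiset.insert_eq_cons, mem_cons, mem_singleton]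
      rintro a ((⟨-, rfl⟩) | rfl | rfl)
      exacts [Set.mem_insert _ _, Or.inr (Or.inl ⟨ℓ, hℓ, rfl⟩), Or.inr (Or.inr ⟨ℓ, hℓ, rfl⟩)]
    · have : (T + 2) ^ ℓ ≤ (T + 2) ^ (T + 1) := Nat.pow_le_pow_right (by omega) (by omega)
      simp only [sum_add, sum_replicate, Multiset.insert_eq_cons, sum_cons, sum_singleton,
        smul_eq_mul, cGen, dGen, target]
      have hn : (ℓ - 2) * (T + 2) ^ (T + 2) + (T + 1 - ℓ) * (T + 2) ^ (T + 2) + (T + 2) ^ (T + 2)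
          = T * (T + 2) ^ (T + 2) := by
        rw [← Nat.add_mul, ← Nat.succ_mul, show (ℓ - 2 + (T + 1 - ℓ)).succ = T by omega]
      omega

theorem factorizationLengths_cGen_subset {ℓ : ℕ} (hL : L ⊆ Set.Iic T) (hℓ : ℓ ∈ Set.Icc 1 T) :
    factorizationLengths (generators L T) (cGen T ℓ) ⊆ {1} := by
  obtain ⟨hℓ1, hℓT⟩ := hℓ
  rintro _ ⟨s, rfl, hs, hsum⟩
  obtain ⟨x, u, v, hu, hv, hcard, hsum'⟩ := exists_card_sum_of_forall_mem_generators hs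
  obtain ⟨hW, ⟨hp, -⟩ | ⟨-, rfl, rfl⟩⟩ := factorization_cases (C := T + 1 - ℓ) (p := ℓ)
    (fun ℓ hℓ => hL (hu ℓ hℓ)) (fun ℓ hℓ => hL (hv ℓ hℓ)) (by omega) (by omega)
    (hsum' ▸ hsum)
  · omega
  · simp only [card_singleton, card_zero, map_singleton, sum_singleton] at hcard hW
    simp only [Set.mem_singleton_iff]
    omega

theorem le_of_mem_generators (hL : L ⊆ Set.Iic T) {a : ℕ} (ha : a ∈ generators L T) :
    (T + 2) ^ (T + 2) ≤ a := by
  rcases ha with rfl | ⟨ℓ, hℓ, rfl⟩ | ⟨ℓ, -, rfl⟩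
  · exact le_rfl
  · exact (Nat.le_mul_of_pos_left _ (Nat.sub_pos_of_lt (Nat.lt_succ_of_le (hL hℓ)))).trans
      (Nat.le_add_right _ _)
  · exact Nat.le_add_right _ _

theorem le_target_of_mem_generators (hL : L ⊆ Set.Icc 1 T) (hT : 1 ≤ T) {a : ℕ}
    (ha : a ∈ generators L T) : a ≤ target T := by
  rcases ha with rfl | ⟨ℓ, hℓ, rfl⟩ | ⟨ℓ, -, rfl⟩
  · exact (Nat.le_mul_of_pos_left _ hT).trans (Nat.le_add_right _ _)
  · obtain ⟨hℓ1, hℓT⟩ := hL hℓ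
    have : (T + 2) ^ ℓ ≤ (T + 2) ^ (T + 1) := Nat.pow_le_pow_right (by omega) (by omega)
    have : (T + 1 - ℓ) * (T + 2) ^ (T + 2) ≤ T * (T + 2) ^ (T + 2) :=
      Nat.mul_le_mul_right _ (by omega)
    unfold cGen target
    omega
  · have : (T + 2) ^ (T + 2) ≤ T * (T + 2) ^ (T + 2) := Nat.le_mul_of_pos_left _ hT
    unfold dGen target
    omega

theorem isAtomOf_of_mem_generators (hL : L ⊆ Set.Icc 1 T) (hT : 1 ≤ T) {a : ℕ}
    (ha : a ∈ generators L T) : IsAtomOf (closureIoi (generators L T) (target T)) a := by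
  have hLT : L ⊆ Set.Iic T := fun ℓ hℓ => (hL hℓ).2
  refine isAtomOf_closureIoi ha (le_target_of_mem_generators hL hT ha) ?_
  have hpos : 0 < (T + 2) ^ (T + 2) := by positivity
  have hε : (T + 2) ^ (T + 1) < (T + 2) ^ (T + 2) := Nat.pow_lt_pow_right (by omega) (by omega)
  rcases ha with rfl | ⟨ℓ, hℓ, rfl⟩ | ⟨ℓ, -, rfl⟩
  · exact factorizationLengths_subset_one_of_lt (fun _ => le_of_mem_generators hLT)
      (by omega) (by omega)
  · exact factorizationLengths_cGen_subset hLT (hL hℓ)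
  · exact factorizationLengths_subset_one_of_lt (fun _ => le_of_mem_generators hLT)
      (by unfold dGen; omega) (by unfold dGen; omega)

end LengthSetRealization

open LengthSetRealization in
theorem stmt10 (L : Set ℕ) (hfin : L.Finite) (hne : L.Nonempty)
    (h2 : ∀ ℓ ∈ L, 2 ≤ ℓ) :
    ∃ (M : AddSubmonoid ℕ) (m : ℕ),
      {n : ℕ | n ∉ M}.Finite ∧ m ∈ M ∧ LengthSet M m = L := by
  obtain ⟨T, hTL, hmax⟩ := Set.exists_max_image L id hfin hne
  have hL : L ⊆ Set.Icc 2 T := fun ℓ hℓ => ⟨h2 ℓ hℓ, hmax ℓ hℓ⟩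
  have hT : 1 ≤ T := (h2 T hTL).trans' one_le_two
  have hlengths := factorizationLengths_target hL
  refine ⟨closureIoi (generators L T) (target T), target T, finite_compl_closureIoi,
    mem_closureIoi_of_mem_factorizationLengths (hlengths ▸ hTL), ?_⟩
  rw [lengthSet_closureIoi fun a => isAtomOf_of_mem_generators
    (hL.trans (Set.Icc_subset_Icc_left one_le_two)) hT, hlengths]
end

section
/- Let V = ℝ^d with d ≥ 1, equipped with the componentwise partial order and the 1-norm. Let M ⊆ V be an additive submonoid with M ⊆ ℝ_{≥0}^d, and let M₀ and N₀ be submonoids of M with M = M₀ + N₀. If M₀ satisfies the ACCP and N₀ is finitely generated, then M satisfies the ACCP. -/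
open Filter Topology Finset

section

variable {α : Type*} [AddCommMonoid α] (ν : α →+ ℝ)

theorem exists_pos_le_of_mem_closure {S : Finset α} (hS : ∀ s ∈ S, s ≠ 0 → 0 < ν s) :
    ∃ ε > 0, ∀ x ∈ AddSubmonoid.closure (S : Set α), x ≠ 0 → ε ≤ ν x := by
  have hgen : ∀ᶠ ε in 𝓝[>] (0 : ℝ), ∀ s ∈ S, s ≠ 0 → ε ≤ ν s := by
    refine S.eventually_all.2 fun s hs => ?_
    by_cases hs0 : s = 0
    · exact .of_forall fun _ h => absurd hs0 h
    · exact ((eventually_lt_nhds (hS s hs hs0)).filter_mono nhdsWithin_le_nhds).mono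
        fun _ h _ => h.le
  obtain ⟨ε, hεS, hε⟩ := (hgen.and self_mem_nhdsWithin).exists
  refine ⟨ε, hε, fun x hx => ?_⟩
  suffices x = 0 ∨ ε ≤ ν x from this.resolve_left
  induction hx using AddSubmonoid.closure_induction with
  | mem s hs => exact (eq_or_ne s 0).imp_right (hεS s hs)
  | zero => exact .inl rfl
  | add x y _ _ hx hy =>
    rcases hx with rfl | hx
    · simpa using hy
    · rw [map_add]
      refine .inr (hx.trans (le_add_of_nonneg_right ?_))
      rcases hy with rfl | hy
      · simp
      · exact hε.le.trans hy

theorem finite_setOf_mem_closure_map_le {S : Finset α} {ε : ℝ} (hε : 0 < ε)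
    (hS : ∀ x ∈ AddSubmonoid.closure (S : Set α), x ≠ 0 → ε ≤ ν x) (C : ℝ) :
    {x | x ∈ AddSubmonoid.closure (S : Set α) ∧ ν x ≤ C}.Finite := by
  classical
  set T := S.filter (· ≠ 0)
  set K := ⌊C / ε⌋₊
  refine ((K • T.val).powerset.toFinset.finite_toSet.image Multiset.sum).subset ?_
  rintro x ⟨hx, hxC⟩
  rw [← AddSubmonoid.closure_sdiff_singleton_zero] at hx
  obtain ⟨l, hlT, rfl⟩ := AddSubmonoid.exists_multiset_of_mem_closure hx
  have hcard : Multiset.card l ≤ K := by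
    refine Nat.le_floor ((le_div_iff₀ hε).2 (le_trans ?_ hxC))
    rw [← nsmul_eq_mul, map_multiset_sum, ← Multiset.card_map ν]
    exact Multiset.card_nsmul_le_sum <| Multiset.forall_mem_map_iff.2 fun z hz =>
      hS z (AddSubmonoid.subset_closure (hlT z hz).1) (hlT z hz).2
  refine ⟨l, Multiset.mem_toFinset.2 (Multiset.mem_powerset.2 ?_), rfl⟩
  refine Multiset.le_iff_count.2 fun a => ?_
  by_cases ha : a ∈ l
  · have haT : a ∈ T := mem_filter.2 (hlT a ha)
    rw [Multiset.count_nsmul, Multiset.count_eq_one_of_mem T.nodup haT, mul_one]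
    exact (Multiset.count_le_card a l).trans hcard
  · simp [Multiset.count_eq_zero_of_notMem ha]

theorem map_nonneg_of_pos {M : AddSubmonoid α} (hν : ∀ x ∈ M, x ≠ 0 → 0 < ν x) :
    ∀ x ∈ M, 0 ≤ ν x := fun x hx =>
  (eq_or_ne x 0).elim (fun h => h ▸ (map_zero ν).ge) fun h => (hν x hx h).le

variable {f c : ℕ → α}

theorem eq_add_sum_Ico_of_eq_add (hfc : ∀ n, f n = f (n + 1) + c n) {m n : ℕ} (h : m ≤ n) :
    f m = f n + ∑ k ∈ Ico m n, c k := by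
  induction n, h using Nat.le_induction with
  | base => simp
  | succ n hmn ih => rw [ih, hfc n, sum_Ico_succ_top hmn]; abel

variable {M : AddSubmonoid α}

theorem antitone_map_of_eq_add (hν : ∀ x ∈ M, 0 ≤ ν x) (hc : ∀ n, c n ∈ M)
    (hfc : ∀ n, f n = f (n + 1) + c n) : Antitone fun n => ν (f n) :=
  antitone_nat_of_succ_le fun n => by
    rw [hfc n, map_add]
    exact le_add_of_nonneg_right (hν _ (hc n))

theorem summable_map_of_eq_add (hν : ∀ x ∈ M, 0 ≤ ν x) (hf : ∀ n, f n ∈ M)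
    (hc : ∀ n, c n ∈ M) (hfc : ∀ n, f n = f (n + 1) + c n) :
    Summable fun n => ν (c n) := by
  refine summable_of_sum_range_le (c := ν (f 0)) (fun n => hν _ (hc n)) fun n => ?_
  have h := congrArg ν (eq_add_sum_Ico_of_eq_add hfc (Nat.zero_le n))
  rw [map_add, map_sum, ← range_eq_Ico] at h
  linarith [hν _ (hf n)]

theorem eventually_mem_of_eq_add {M₀ N₀ : AddSubmonoid α} (hν : ∀ x ∈ M, 0 ≤ ν x)
    (hM₀ : M₀ ≤ M) (hsum : ∀ x ∈ M, ∃ a ∈ M₀, ∃ b ∈ N₀, x = a + b) {ε : ℝ} (hε : 0 < ε)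
    (hN₀ : ∀ x ∈ N₀, x ≠ 0 → ε ≤ ν x) (hf : ∀ n, f n ∈ M) (hc : ∀ n, c n ∈ M)
    (hfc : ∀ n, f n = f (n + 1) + c n) : ∀ᶠ n in atTop, c n ∈ M₀ := by
  have hsmall : ∀ᶠ n in atTop, ν (c n) < ε :=
    (summable_map_of_eq_add ν hν hf hc hfc).tendsto_atTop_zero.eventually (gt_mem_nhds hε)
  refine hsmall.mono fun n hn => ?_
  obtain ⟨a, ha, b, hb, hab⟩ := hsum (c n) (hc n)
  obtain rfl | hb0 := eq_or_ne b 0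
  · rwa [hab, add_zero]
  · rw [hab, map_add] at hn
    linarith [hN₀ b hb hb0, hν a (hM₀ ha)]

theorem eq_of_ge_of_strictMono_map_le (hν : ∀ x ∈ M, x ≠ 0 → 0 < ν x) (hc : ∀ n, c n ∈ M)
    (hfc : ∀ n, f n = f (n + 1) + c n) {φ : ℕ → ℕ} (hφ : StrictMono φ) {I : ℕ}
    (hle : ∀ i ≥ I, ν (f (φ I)) ≤ ν (f (φ i))) : ∀ n ≥ φ I, f n = f (φ I) := by
  have hν' := map_nonneg_of_pos ν hν
  have hanti := antitone_map_of_eq_add ν hν' hc hfc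
  have hstep : ∀ n ≥ φ I, f (n + 1) = f n := by
    intro n hn
    have hI : I ≤ n + 1 := (hφ.id_le I).trans (hn.trans n.le_succ)
    have hlow : ν (f (φ I)) ≤ ν (f (n + 1)) := (hle _ hI).trans (hanti (hφ.id_le _))
    have hcn : ν (c n) ≤ 0 := by
      have hup : ν (f n) ≤ ν (f (φ I)) := hanti hn
      have hsplit := congrArg ν (hfc n)
      rw [map_add] at hsplit
      linarith
    by_contra hne
    have hc0 : c n ≠ 0 := fun h => hne (by rw [hfc n, h, add_zero])
    exact (hν _ (hc n) hc0).not_ge hcn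
  intro n hn
  induction n, hn using Nat.le_induction with
  | base => rfl
  | succ n hn ih => rw [hstep n hn, ih]

end

theorem addACCP_of_forall_mem_add_of_fg {α : Type*} [AddCancelCommMonoid α] (ν : α →+ ℝ)
    {M M₀ N₀ : AddSubmonoid α} (hν : ∀ x ∈ M, x ≠ 0 → 0 < ν x) (hM₀ : M₀ ≤ M) (hN₀ : N₀ ≤ M)
    (hsum : ∀ x ∈ M, ∃ a ∈ M₀, ∃ b ∈ N₀, x = a + b) (hacc : AddACCP M₀) (hfg : N₀.FG) :
    AddACCP M := by
  obtain ⟨S, rfl⟩ := hfg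
  have hν' := map_nonneg_of_pos ν hν
  obtain ⟨ε, hε, hεS⟩ := exists_pos_le_of_mem_closure ν fun s hs hs0 =>
    hν s (hN₀ (AddSubmonoid.subset_closure hs)) hs0
  intro f hf hchain
  choose c hc hfc using hchain
  choose a ha b hb hab using fun n => hsum (f n) (hf n)
  have hb_le : ∀ n, ν (b n) ≤ ν (f 0) := fun n => by
    have hsplit := congrArg ν (hab n)
    rw [map_add] at hsplit
    linarith [hν' _ (hM₀ (ha n)), antitone_map_of_eq_add ν hν' hc hfc (Nat.zero_le n)]
  obtain ⟨w, -, hw⟩ := (finite_setOf_mem_closure_map_le ν hε hεS (ν (f 0))).frequently_exists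
    (l := atTop) (p := fun w n => b n = w) |>.1 (.of_forall fun n => ⟨b n, ⟨hb n, hb_le n⟩, rfl⟩)
  obtain ⟨N₁, hN₁⟩ := eventually_atTop.1 <|
    eventually_mem_of_eq_add ν hν' hM₀ hsum hε hεS hf hc hfc
  obtain ⟨φ, hφ, hφw⟩ := extraction_of_frequently_atTop (hw.and_eventually (eventually_ge_atTop N₁))
  have hchain₀ : ∀ i, ∃ D ∈ M₀, a (φ i) = a (φ (i + 1)) + D := fun i =>
    ⟨∑ k ∈ Ico (φ i) (φ (i + 1)), c k,
      sum_mem fun k hk => hN₁ k ((hφw i).2.trans (mem_Ico.1 hk).1),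
      add_right_cancel (b := w) <| by
        have h := eq_add_sum_Ico_of_eq_add hfc (hφ.monotone i.le_succ)
        rwa [hab, hab, (hφw i).1, (hφw (i + 1)).1, add_right_comm] at h⟩
  obtain ⟨I, hI⟩ := hacc (fun i => a (φ i)) (fun i => ha _) hchain₀
  have hconst := eq_of_ge_of_strictMono_map_le ν hν hc hfc hφ (I := I) fun i hi => by
    obtain ⟨e, he, hae⟩ := hI i hi
    rw [hab, hab, (hφw i).1, (hφw I).1, hae, map_add, map_add, map_add]
    linarith [hν' e (hM₀ he)]
  exact ⟨φ I, fun n hn => ⟨0, zero_mem M, by rw [hconst n hn, add_zero]⟩⟩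

theorem stmt11_general (d : ℕ) (M M₀ N₀ : AddSubmonoid (Fin d → ℝ))
    (hpos : ∀ x ∈ M, ∀ i, 0 ≤ x i)
    (hM0 : M₀ ≤ M) (hN0 : N₀ ≤ M)
    (hsum : ∀ x ∈ M, ∃ a ∈ M₀, ∃ b ∈ N₀, x = a + b)
    (hacc : AddACCP M₀)
    (hfg : ∃ S : Finset (Fin d → ℝ), AddSubmonoid.closure (S : Set (Fin d → ℝ)) = N₀) :
    AddACCP M := by
  refine addACCP_of_forall_mem_add_of_fg (∑ i, Pi.evalAddMonoidHom (fun _ => ℝ) i)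
    (fun x hx hx0 => ?_) hM0 hN0 hsum hacc hfg
  obtain ⟨i, hi⟩ := Function.ne_iff.1 hx0
  simp only [AddMonoidHom.finsetSum_apply, Pi.evalAddMonoidHom_apply]
  exact sum_pos' (fun j _ => hpos x hx j) ⟨i, mem_univ i, (hpos x hx i).lt_of_ne' hi⟩

theorem stmt11 (d : ℕ) (hd : 1 ≤ d) (M M₀ N₀ : AddSubmonoid (Fin d → ℝ))
    (hpos : ∀ x ∈ M, ∀ i, 0 ≤ x i)
    (hM0 : M₀ ≤ M) (hN0 : N₀ ≤ M)
    (hsum : ∀ x ∈ M, ∃ a ∈ M₀, ∃ b ∈ N₀, x = a + b)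
    (hacc : AddACCP M₀)
    (hfg : ∃ S : Finset (Fin d → ℝ), AddSubmonoid.closure (S : Set (Fin d → ℝ)) = N₀) :
    AddACCP M :=
  stmt11_general d M M₀ N₀ hpos hM0 hN0 hsum hacc hfg
end

section
/- Let M₀ = {0} ∪ ℚ_{≥1} and N₀ = ⟨1/p : p prime⟩, both additive submonoids of ℚ_{≥0}. Then the Puiseux monoid M = M₀ + N₀ has 𝒜(M) = {1/p : p prime} and is not atomic; in particular, 5/4 ∈ M is a nonzero element that is not a sum of atoms of M. -/
theorem mem_of_isAtomOf_closure {α : Type*} [AddCommMonoid α] {S : Set α} {a : α}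
    (ha : IsAtomOf (AddSubmonoid.closure S) a) : a ∈ S := by
  suffices ∀ x ∈ AddSubmonoid.closure S, IsAtomOf (AddSubmonoid.closure S) x → x ∈ S from
    this a ha.1 ha
  intro x hx
  induction hx using AddSubmonoid.closure_induction with
  | mem x hx => exact fun _ => hx
  | zero => exact fun h => absurd rfl h.2.1
  | add x y hx hy ihx ihy =>
    intro h
    rcases h.2.2 x hx y hy rfl with rfl | rfl
    · rw [zero_add] at h ⊢
      exact ihy h
    · rw [add_zero] at h ⊢
      exact ihx h

theorem padicNorm_one_div_prime {p q : ℕ} [Fact p.Prime] (hq : q.Prime) :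
    padicNorm p (1 / q) = if q = p then (p : ℚ) else 1 := by
  have := Fact.mk hq
  rw [padicNorm.div, padicNorm.one]
  split_ifs with h
  · subst h
    rw [padicNorm.padicNorm_p_of_prime, one_div, inv_inv]
  · rw [padicNorm.padicNorm_of_prime_of_ne (Ne.symm h), div_one]

theorem one_div_lt_one_of_prime {p : ℕ} (hp : p.Prime) : 1 / (p : ℚ) < 1 := by
  rw [one_div]
  exact inv_lt_one_of_one_lt₀ (by exact_mod_cast hp.one_lt)

theorem padicNorm_five_div_four : padicNorm 2 (5 / 4 : ℚ) = 4 := by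
  have h5 : padicNorm 2 (5 : ℕ) = 1 := (padicNorm.nat_eq_one_iff 5).2 (by norm_num)
  have h2 : padicNorm 2 (2 : ℕ) = 1 / 2 := by
    rw [padicNorm.padicNorm_p_of_prime]
    norm_num
  have key : padicNorm 2 (2 : ℕ) * padicNorm 2 (2 : ℕ) * padicNorm 2 (5 / 4 : ℚ) =
      padicNorm 2 (5 : ℕ) := by
    rw [← padicNorm.mul, ← padicNorm.mul]
    norm_num
  rw [h5, h2] at key
  linarith

namespace MP

variable {P : Set ℕ}

theorem one_div_mem {p : ℕ} (hp : p ∈ P) : 1 / (p : ℚ) ∈ MP P :=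
  AddSubmonoid.subset_closure ⟨p, hp, rfl⟩

theorem nonneg {x : ℚ} (hx : x ∈ MP P) : 0 ≤ x := by
  induction hx using AddSubmonoid.closure_induction with
  | mem x hx =>
    obtain ⟨p, -, rfl⟩ := hx
    positivity
  | zero => exact le_rfl
  | add x y _ _ hx hy => exact add_nonneg hx hy

theorem padicNorm_le {p : ℕ} [hp : Fact p.Prime] (hP : ∀ q ∈ P, q.Prime) {x : ℚ}
    (hx : x ∈ MP P) : padicNorm p x ≤ p := by
  have hp1 : (1 : ℚ) ≤ p := by exact_mod_cast hp.out.one_lt.le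
  induction hx using AddSubmonoid.closure_induction with
  | mem x hx =>
    obtain ⟨q, hq, rfl⟩ := hx
    rw [padicNorm_one_div_prime (hP q hq)]
    split_ifs
    exacts [le_rfl, hp1]
  | zero => simp
  | add x y _ _ hx hy => exact padicNorm.nonarchimedean.trans (max_le hx hy)

theorem one_div_le_of_one_lt_padicNorm {p : ℕ} [Fact p.Prime] (hP : ∀ q ∈ P, q.Prime) {x : ℚ}
    (hx : x ∈ MP P) (hpx : 1 < padicNorm p x) : 1 / (p : ℚ) ≤ x := by
  induction hx using AddSubmonoid.closure_induction with
  | mem x hx =>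
    obtain ⟨q, hq, rfl⟩ := hx
    rw [padicNorm_one_div_prime (hP q hq)] at hpx
    split_ifs at hpx with h
    · rw [h]
    · exact absurd hpx (lt_irrefl 1)
  | zero => norm_num at hpx
  | add x y hx hy ihx ihy =>
    rcases lt_max_iff.1 (hpx.trans_le padicNorm.nonarchimedean) with h | h
    · linarith [ihx h, nonneg hy]
    · linarith [ihy h, nonneg hx]

theorem isAtomOf_one_div {p : ℕ} (hP : ∀ q ∈ P, q.Prime) (hp : p ∈ P) :
    IsAtomOf (MP P) (1 / (p : ℚ)) := by
  have := Fact.mk (hP p hp)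
  refine ⟨one_div_mem hp, by simp [(hP p hp).ne_zero], fun b hb c hc hbc => ?_⟩
  have hnorm : 1 < padicNorm p (b + c) := by
    rw [hbc, padicNorm_one_div_prime (hP p hp), if_pos rfl]
    exact_mod_cast (hP p hp).one_lt
  rcases lt_max_iff.1 (hnorm.trans_le padicNorm.nonarchimedean) with h | h
  · right
    linarith [one_div_le_of_one_lt_padicNorm hP hb h, nonneg hc]
  · left
    linarith [one_div_le_of_one_lt_padicNorm hP hc h, nonneg hb]

theorem isAtomOf_iff (hP : ∀ q ∈ P, q.Prime) {a : ℚ} :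
    IsAtomOf (MP P) a ↔ ∃ p ∈ P, a = 1 / (p : ℚ) :=
  ⟨mem_of_isAtomOf_closure, fun ⟨_, hp, ha⟩ => ha ▸ isAtomOf_one_div hP hp⟩

end MP

theorem mem_iff_of_coe_eq_add {M0 N M : AddSubmonoid ℚ} (hN : ∀ x ∈ N, 0 ≤ x)
    (hM0 : (M0 : Set ℚ) = {0} ∪ Set.Ici 1)
    (hM : (M : Set ℚ) = {x | ∃ a ∈ M0, ∃ b ∈ N, x = a + b}) (x : ℚ) :
    x ∈ M ↔ x ∈ N ∨ 1 ≤ x := by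
  have mem_M0 (a : ℚ) : a ∈ M0 ↔ a = 0 ∨ 1 ≤ a := by
    rw [← SetLike.mem_coe, hM0]
    rfl
  rw [← SetLike.mem_coe, hM]
  simp only [Set.mem_ofPred_eq, mem_M0]
  constructor
  · rintro ⟨a, rfl | ha, b, hb, rfl⟩
    · exact Or.inl (by rwa [zero_add])
    · exact Or.inr (by linarith [hN b hb])
  · rintro (hx | hx)
    · exact ⟨0, Or.inl rfl, x, hx, (zero_add x).symm⟩
    · exact ⟨x, Or.inr hx, 0, N.zero_mem, (add_zero x).symm⟩

theorem isAtomOf_iff_of_lt_one {N M : AddSubmonoid ℚ} (hN : ∀ x ∈ N, 0 ≤ x)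
    (hM : ∀ x, x ∈ M ↔ x ∈ N ∨ 1 ≤ x) {a : ℚ} (ha : a < 1) :
    IsAtomOf M a ↔ IsAtomOf N a := by
  have mem_of_lt_one {x : ℚ} (hx : x ∈ M) (hx1 : x < 1) : x ∈ N :=
    ((hM x).1 hx).resolve_right hx1.not_ge
  have mem_of_mem {x : ℚ} (hx : x ∈ N) : x ∈ M := (hM x).2 (Or.inl hx)
  have nonneg {x : ℚ} (hx : x ∈ M) : 0 ≤ x := ((hM x).1 hx).elim (hN x) zero_le_one.trans
  constructor
  · rintro ⟨haM, ha0, hsplit⟩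
    exact ⟨mem_of_lt_one haM ha, ha0, fun b hb c hc => hsplit b (mem_of_mem hb) c (mem_of_mem hc)⟩
  · rintro ⟨haN, ha0, hsplit⟩
    refine ⟨mem_of_mem haN, ha0, fun b hb c hc hbc => hsplit b ?_ c ?_ hbc⟩
    · exact mem_of_lt_one hb (by linarith [nonneg hc])
    · exact mem_of_lt_one hc (by linarith [nonneg hb])

theorem not_isAtomOf_of_one_le {M : AddSubmonoid ℚ}
    (hM : ∀ x, x ∈ M ↔ x ∈ MP {p | p.Prime} ∨ 1 ≤ x) {a : ℚ} (ha : 1 ≤ a) :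
    ¬ IsAtomOf M a := by
  rintro ⟨-, -, hsplit⟩
  obtain ⟨p, hp, hpa⟩ : ∃ p : ℕ, p.Prime ∧ a - 1 / p ∈ M := by
    rcases ha.eq_or_lt with rfl | ha
    · refine ⟨2, Nat.prime_two, (hM _).2 (Or.inl ?_)⟩
      convert MP.one_div_mem (P := {p | p.Prime}) Nat.prime_two using 1
      norm_num
    · obtain ⟨n, hn⟩ := exists_nat_gt (a - 1)⁻¹
      obtain ⟨p, hnp, hp⟩ := Nat.exists_infinite_primes n
      have : 1 / (p : ℚ) < a - 1 := by
        rw [one_div]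
        exact inv_lt_of_inv_lt₀ (sub_pos.2 ha) (hn.trans_le (by exact_mod_cast hnp))
      exact ⟨p, hp, (hM _).2 (Or.inr (by linarith))⟩
  have hp1 := one_div_lt_one_of_prime hp
  have hp0 : 0 < 1 / (p : ℚ) := one_div_pos.2 (by exact_mod_cast hp.pos)
  rcases hsplit _ hpa _ ((hM _).2 (Or.inl (MP.one_div_mem hp))) (sub_add_cancel a _) with h | h
  · linarith
  · linarith

theorem isAtomOf_iff_isAtomOf_MP {M : AddSubmonoid ℚ}
    (hM : ∀ x, x ∈ M ↔ x ∈ MP {p | p.Prime} ∨ 1 ≤ x) {a : ℚ} :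
    IsAtomOf M a ↔ IsAtomOf (MP {p | p.Prime}) a := by
  rcases lt_or_ge a 1 with ha | ha
  · exact isAtomOf_iff_of_lt_one (fun _ => MP.nonneg) hM ha
  · refine iff_of_false (not_isAtomOf_of_one_le hM ha) fun h => ?_
    obtain ⟨p, hp, rfl⟩ := (MP.isAtomOf_iff fun _ => id).1 h
    exact (one_div_lt_one_of_prime hp).not_ge ha

theorem stmt12 (M0 N0 M : AddSubmonoid ℚ)
    (hM0 : (M0 : Set ℚ) = {0} ∪ Set.Ici 1)
    (hN0 : N0 = AddSubmonoid.closure {q : ℚ | ∃ p : ℕ, p.Prime ∧ q = 1 / (p : ℚ)})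
    (hM : (M : Set ℚ) = {x | ∃ a ∈ M0, ∃ b ∈ N0, x = a + b}) :
    (∀ a : ℚ, IsAtomOf M a ↔ ∃ p : ℕ, p.Prime ∧ a = 1 / (p : ℚ)) ∧
    (5 / 4 : ℚ) ∈ M ∧ (5 / 4 : ℚ) ≠ 0 ∧
    ¬ ∃ s : Multiset ℚ, (∀ a ∈ s, IsAtomOf M a) ∧ s.sum = 5 / 4 := by
  obtain rfl : N0 = MP {p | p.Prime} := hN0
  have hMmem := mem_iff_of_coe_eq_add (fun _ => MP.nonneg) hM0 hM
  have hatom (a : ℚ) : IsAtomOf M a ↔ IsAtomOf (MP {p | p.Prime}) a :=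
    isAtomOf_iff_isAtomOf_MP hMmem
  refine ⟨fun a => (hatom a).trans (MP.isAtomOf_iff fun _ => id),
    (hMmem _).2 (Or.inr (by norm_num)), by norm_num, ?_⟩
  rintro ⟨s, hs, hsum⟩
  have hmem : (5 / 4 : ℚ) ∈ MP {p | p.Prime} :=
    hsum ▸ AddSubmonoid.multiset_sum_mem _ s fun a ha => ((hatom a).1 (hs a ha)).1
  have := MP.padicNorm_le (p := 2) (fun _ => id) hmem
  rw [padicNorm_five_div_four] at this
  norm_num at this
end

section
/- Let M₀ be a Puiseux monoid satisfying the ACCP with 1 ∈ M₀ and 1 not an atom of M₀, and let N be a numerical monoid containing a prime number p such that p > max 𝒜(N) and v_p(q) ≥ 0 for every nonzero q ∈ M₀. Then the Puiseux monoid M = M₀ + p^{-1}N satisfies the ACCP and 𝒜(M) = 𝒜(M₀) ∪ 𝒜(p^{-1}N). -/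
/-- The additive monoid homomorphism `ℕ →+ ℚ` sending `n` to `n / p`. -/
def scaleRecip (p : ℕ) : ℕ →+ ℚ where
  toFun n := (n : ℚ) / (p : ℚ)
  map_zero' := by simp
  map_add' := fun a b => by push_cast; ring

/-!
The valuation condition makes the `p⁻¹N`-part of an element of `M` well defined modulo `p`:
if `a + b/p = a' + b'/p` with `a, a' ∈ M₀`, then `p ∣ b - b'`. For an atom `b₀/p` of `p⁻¹N`,
a splitting `(a₁ + b₁/p) + (a₂ + b₂/p)` has `b₁ + b₂ ≡ b₀` and `b₁ + b₂ ≤ b₀ < p`, which forces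
`a₁ = a₂ = 0`. For an atom `a` of `M₀`, `b₁ + b₂ = pk` and `a = (a₁ + a₂) + k`; no positive
integer is an atom of `M₀` (as `1 ∈ M₀` is not one), so `k = 0`.

Along a chain in `M`, the `p⁻¹N`-parts of the steps are multiples of `1/p` summing to at most
the first term, so eventually all steps lie in `M₀`. The least `b` with `f n - b/p ∈ M₀` is then
monotone and bounded, hence eventually constant, and subtracting it leaves a chain in `M₀`.
-/

open Finset

section Atoms

variable {α : Type*} [AddCommMonoid α] {S T : AddSubmonoid α} {a : α}

theorem IsAtomOf.of_le (hST : S ≤ T) (haS : a ∈ S) (ha : IsAtomOf T a) : IsAtomOf S a :=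
  ⟨haS, ha.2.1, fun b hb c hc => ha.2.2 b (hST hb) c (hST hc)⟩

theorem IsAtomOf.of_sup (ha : IsAtomOf (S ⊔ T) a) : IsAtomOf S a ∨ IsAtomOf T a := by
  obtain ⟨s, hs, t, ht, rfl⟩ := AddSubmonoid.mem_sup.mp ha.1
  rcases ha.2.2 s (AddSubmonoid.mem_sup_left hs) t (AddSubmonoid.mem_sup_right ht) rfl
    with rfl | rfl
  · rw [zero_add] at ha ⊢
    exact .inr (ha.of_le le_sup_right ht)
  · rw [add_zero] at ha ⊢
    exact .inl (ha.of_le le_sup_left hs)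

theorem IsAtomOf.of_forall_mem (hST : S ≤ T) (ha : IsAtomOf S a)
    (h : ∀ x ∈ T, ∀ y ∈ T, x + y = a → x ∈ S ∧ y ∈ S) : IsAtomOf T a :=
  ⟨hST ha.1, ha.2.1, fun x hx y hy hxy =>
    ha.2.2 x (h x hx y hy hxy).1 y (h x hx y hy hxy).2 hxy⟩

theorem IsAtomOf.of_map {β : Type*} [AddCommMonoid β] {f : α →+ β} (hf : Function.Injective f)
    {x : α} (hx : IsAtomOf (S.map f) (f x)) : IsAtomOf S x := by
  refine ⟨(AddSubmonoid.mem_map_iff_mem hf).mp hx.1, fun h => hx.2.1 (by rw [h, map_zero]),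
    fun b hb c hc hbc => ?_⟩
  simpa only [map_eq_zero_iff f hf] using
    hx.2.2 (f b) (AddSubmonoid.mem_map_of_mem f hb) (f c) (AddSubmonoid.mem_map_of_mem f hc)
      (by rw [← map_add, hbc])

end Atoms

theorem not_isAtomOf_natCast {α : Type*} [AddCommMonoidWithOne α] [CharZero α]
    {S : AddSubmonoid α} (h1 : (1 : α) ∈ S) (h1na : ¬ IsAtomOf S 1) :
    ∀ k : ℕ, ¬ IsAtomOf S k
  | 0, hk => hk.2.1 Nat.cast_zero
  | 1, hk => h1na (by simpa using hk)
  | k + 2, hk => by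
    have hk1 : ((k + 1 : ℕ) : α) ∈ S := by simpa using S.nsmul_mem h1 (k + 1)
    have hsplit : 1 + ((k + 1 : ℕ) : α) = ((k + 2 : ℕ) : α) := by
      push_cast
      rw [add_comm, add_assoc, one_add_one_eq_two]
    rcases hk.2.2 1 h1 _ hk1 hsplit with h | h
    · exact one_ne_zero h
    · exact Nat.cast_ne_zero.mpr k.succ_ne_zero h

theorem Rat.dvd_of_prime_mul_eq_intCast {p : ℕ} (hp : p.Prime) {q : ℚ} (hq : ¬ p ∣ q.den)
    {z : ℤ} (h : (p : ℚ) * q = z) : (p : ℤ) ∣ z := by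
  have hz : z * q.den = p * q.num := by
    have : (z : ℚ) * q.den = p * q.num := by rw [← h, mul_assoc, Rat.mul_den_eq_num]
    exact_mod_cast this
  have hdvd : (p : ℤ) ∣ z * q.den := hz ▸ dvd_mul_right _ _
  exact ((Nat.prime_iff_prime_int.mp hp).dvd_mul.mp hdvd).resolve_right
    fun h => hq (Int.natCast_dvd_natCast.mp h)

theorem Rat.not_dvd_den_sub {p : ℕ} (hp : p.Prime) {a b : ℚ} (ha : ¬ p ∣ a.den)
    (hb : ¬ p ∣ b.den) : ¬ p ∣ (a - b).den := fun h =>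
  (hp.dvd_mul.mp (h.trans (Rat.sub_den_dvd a b))).elim ha hb

theorem Nat.modEq_of_add_div_eq {p : ℕ} (hp : p.Prime) {a a' : ℚ} (ha : ¬ p ∣ a.den)
    (ha' : ¬ p ∣ a'.den) {b b' : ℕ} (h : a + b / p = a' + b' / p) : b ≡ b' [MOD p] := by
  have hp0 : (p : ℚ) ≠ 0 := by exact_mod_cast hp.ne_zero
  refine Nat.modEq_iff_dvd.mpr
    (Rat.dvd_of_prime_mul_eq_intCast hp (Rat.not_dvd_den_sub hp ha ha') ?_)
  field_simp at h
  push_cast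
  linarith

theorem Nat.exists_forall_ge_eq_of_monotone {u : ℕ → ℕ} (hu : Monotone u) {B : ℕ}
    (hB : ∀ n, u n ≤ B) : ∃ n₀, ∀ n ≥ n₀, u n = u n₀ := by
  have hbdd : BddAbove (Set.range u) := ⟨B, by rintro _ ⟨n, rfl⟩; exact hB n⟩
  obtain ⟨n₀, hn₀⟩ := Nat.sSup_mem (Set.range_nonempty u) hbdd
  exact ⟨n₀, fun n hn => le_antisymm (hn₀ ▸ le_csSup hbdd ⟨n, rfl⟩) (hu hn)⟩

theorem add_sum_range_eq_of_chain {α : Type*} [AddCommMonoid α] {f c : ℕ → α}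
    (h : ∀ n, f n = f (n + 1) + c n) (n : ℕ) : f n + ∑ k ∈ range n, c k = f 0 := by
  induction n with
  | zero => simp
  | succ n ih => rw [sum_range_succ, ← ih, h n, add_assoc, add_comm (c n)]

theorem exists_stable_of_shift {α : Type*} [AddCommMonoid α] {M : AddSubmonoid α}
    {f : ℕ → α} (m : ℕ) (h : ∃ n₀, ∀ n ≥ n₀, ∃ c ∈ M, f (m + n) = f (m + n₀) + c) :
    ∃ n₀, ∀ n ≥ n₀, ∃ c ∈ M, f n = f n₀ + c := by
  obtain ⟨n₀, h⟩ := h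
  refine ⟨m + n₀, fun n hn => ?_⟩
  obtain ⟨k, rfl⟩ := Nat.exists_eq_add_of_le (le_of_add_le_left hn)
  exact h k (by omega)

@[simp]
theorem scaleRecip_apply (p n : ℕ) : scaleRecip p n = n / p := rfl

theorem scaleRecip_injective {p : ℕ} (hp : p ≠ 0) : Function.Injective (scaleRecip p) :=
  fun m n h => by
    have hp0 : (p : ℚ) ≠ 0 := by exact_mod_cast hp
    simpa [hp0] using h

section PuiseuxSum

variable {S : AddSubmonoid ℚ} {N : AddSubmonoid ℕ} {p : ℕ}

theorem mem_sup_map_scaleRecip {x : ℚ} :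
    x ∈ S ⊔ N.map (scaleRecip p) ↔ ∃ a ∈ S, ∃ b ∈ N, a + b / p = x := by
  simp [AddSubmonoid.mem_sup, AddSubmonoid.mem_map]

theorem nonneg_of_mem_sup_map_scaleRecip (hS : ∀ x ∈ S, 0 ≤ x) {x : ℚ}
    (hx : x ∈ S ⊔ N.map (scaleRecip p)) : 0 ≤ x := by
  obtain ⟨a, ha, b, -, rfl⟩ := mem_sup_map_scaleRecip.mp hx
  have := hS a ha
  positivity

theorem isAtomOf_sup_map_scaleRecip_of_left (hp : p.Prime) (hden : ∀ q ∈ S, ¬ p ∣ q.den)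
    (h1 : (1 : ℚ) ∈ S) (h1na : ¬ IsAtomOf S 1) {a : ℚ}
    (ha : IsAtomOf S a) : IsAtomOf (S ⊔ N.map (scaleRecip p)) a := by
  have hp0 : (p : ℚ) ≠ 0 := by exact_mod_cast hp.ne_zero
  refine ha.of_forall_mem le_sup_left ?_
  rintro x hx y hy rfl
  obtain ⟨a₁, ha₁, b₁, -, rfl⟩ := mem_sup_map_scaleRecip.mp hx
  obtain ⟨a₂, ha₂, b₂, -, rfl⟩ := mem_sup_map_scaleRecip.mp hy
  obtain ⟨k, hk⟩ : p ∣ b₁ + b₂ := Nat.modEq_zero_iff_dvd.mp <|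
    Nat.modEq_of_add_div_eq hp (hden _ (add_mem ha₁ ha₂)) (hden _ ha.1) (b' := 0)
      (by push_cast; ring)
  have hsplit : a₁ + b₁ / p + (a₂ + b₂ / p) = (a₁ + a₂) + k := by
    have : (b₁ + b₂ : ℚ) = p * k := by exact_mod_cast hk
    field_simp
    linear_combination this
  have hkS : (k : ℚ) ∈ S := by simpa using S.nsmul_mem h1 k
  rcases ha.2.2 _ (add_mem ha₁ ha₂) _ hkS hsplit.symm with h | h
  · rw [hsplit, h, zero_add] at ha
    exact absurd ha (not_isAtomOf_natCast h1 h1na k)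
  · obtain rfl : k = 0 := by exact_mod_cast h
    obtain ⟨rfl, rfl⟩ : b₁ = 0 ∧ b₂ = 0 := by omega
    simpa using ⟨ha₁, ha₂⟩

theorem isAtomOf_sup_map_scaleRecip_of_right (hS : ∀ x ∈ S, 0 ≤ x) (hp : p.Prime)
    (hden : ∀ q ∈ S, ¬ p ∣ q.den) (hlt : ∀ b : ℕ, IsAtomOf N b → b < p) {a : ℚ}
    (ha : IsAtomOf (N.map (scaleRecip p)) a) : IsAtomOf (S ⊔ N.map (scaleRecip p)) a := by
  have hp0 : (0 : ℚ) < p := by exact_mod_cast hp.pos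
  obtain ⟨b₀, -, rfl⟩ := AddSubmonoid.mem_map.mp ha.1
  have hb₀ : b₀ < p := hlt b₀ (ha.of_map (scaleRecip_injective hp.ne_zero))
  refine ha.of_forall_mem le_sup_right ?_
  intro x hx y hy hxy
  obtain ⟨a₁, ha₁, b₁, hb₁, rfl⟩ := mem_sup_map_scaleRecip.mp hx
  obtain ⟨a₂, ha₂, b₂, hb₂, rfl⟩ := mem_sup_map_scaleRecip.mp hy
  rw [scaleRecip_apply] at hxy
  have hsum : (a₁ + a₂) + ((b₁ + b₂ : ℕ) : ℚ) / p = 0 + (b₀ : ℚ) / p := by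
    rw [← hxy]; push_cast; ring
  have hle : b₁ + b₂ ≤ b₀ := by
    have := hS _ (add_mem ha₁ ha₂)
    have : ((b₁ + b₂ : ℕ) : ℚ) / p ≤ b₀ / p := by linarith
    exact_mod_cast (div_le_div_iff_of_pos_right hp0).mp this
  have hb : b₁ + b₂ = b₀ := (Nat.modEq_of_add_div_eq hp (hden _ (add_mem ha₁ ha₂))
    (hden 0 (zero_mem _)) hsum).eq_of_lt_of_lt (by omega) hb₀
  obtain ⟨rfl, rfl⟩ : a₁ = 0 ∧ a₂ = 0 := by
    rw [hb] at hsum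
    constructor <;> linarith [hS _ ha₁, hS _ ha₂]
  simpa using ⟨⟨b₁, hb₁, rfl⟩, ⟨b₂, hb₂, rfl⟩⟩

theorem exists_steps_mem_left_of_chain (hS : ∀ x ∈ S, 0 ≤ x) (hp : 0 < p) {f : ℕ → ℚ}
    (hf : ∀ n, f n ∈ S ⊔ N.map (scaleRecip p))
    (hstep : ∀ n, ∃ c ∈ S ⊔ N.map (scaleRecip p), f n = f (n + 1) + c) :
    ∃ m, ∀ n ≥ m, ∃ c ∈ S, f n = f (n + 1) + c := by
  have hp0 : (0 : ℚ) < p := by exact_mod_cast hp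
  choose c hc hfc using hstep
  choose α hα β _ hαβ using fun n => mem_sup_map_scaleRecip.mp (hc n)
  set B : ℕ → ℕ := fun n => ∑ k ∈ range n, β k
  have hB : ∀ n, B n ≤ ⌊p * f 0⌋₊ := by
    intro n
    have hβc : ∑ k ∈ range n, (β k : ℚ) / p ≤ ∑ k ∈ range n, c k :=
      sum_le_sum fun k _ => by rw [← hαβ k]; linarith [hS _ (hα k)]
    have hcf : ∑ k ∈ range n, c k ≤ f 0 := by
      rw [← add_sum_range_eq_of_chain hfc n]
      linarith [nonneg_of_mem_sup_map_scaleRecip hS (hf n)]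
    rw [← sum_div] at hβc
    refine Nat.le_floor ?_
    push_cast [B]
    rw [← div_le_iff₀' hp0]
    exact hβc.trans hcf
  obtain ⟨m, hm⟩ := Nat.exists_forall_ge_eq_of_monotone
    (fun _ _ h => sum_le_sum_of_subset (range_mono h)) hB
  refine ⟨m, fun n hn => ⟨α n, hα n, ?_⟩⟩
  have hβn : β n = 0 := by
    have hsucc : B (n + 1) = B n + β n := sum_range_succ β n
    have := hm n hn
    have := hm (n + 1) (by omega)
    omega
  rw [hfc n, ← hαβ n, hβn]
  simp

theorem exists_stable_of_steps_mem_left (hS : ∀ x ∈ S, 0 ≤ x) (hacc : AddACCP S) (hp : 0 < p)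
    {f : ℕ → ℚ} (hf : ∀ n, f n ∈ S ⊔ N.map (scaleRecip p))
    (hstep : ∀ n, ∃ c ∈ S, f n = f (n + 1) + c) :
    ∃ n₀, ∀ n ≥ n₀, ∃ c ∈ S, f n = f n₀ + c := by
  classical
  have hp0 : (0 : ℚ) < p := by exact_mod_cast hp
  have hex : ∀ n, ∃ b : ℕ, b ∈ N ∧ f n - b / p ∈ S := fun n => by
    obtain ⟨a, ha, b, hb, hab⟩ := mem_sup_map_scaleRecip.mp (hf n)
    exact ⟨b, hb, by rwa [← hab, add_sub_cancel_right]⟩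
  set b : ℕ → ℕ := fun n => Nat.find (hex n)
  have hbS : ∀ n, f n - b n / p ∈ S := fun n => (Nat.find_spec (hex n)).2
  have hb_mono : Monotone b := monotone_nat_of_le_succ fun n => by
    obtain ⟨c, hc, hfc⟩ := hstep n
    refine Nat.find_min' _ ⟨(Nat.find_spec (hex (n + 1))).1, ?_⟩
    rw [hfc, add_sub_right_comm]
    exact add_mem (hbS (n + 1)) hc
  have hf_anti : Antitone f := antitone_nat_of_succ_le fun n => by
    obtain ⟨c, hc, hfc⟩ := hstep n
    linarith [hS c hc]
  have hb_le : ∀ n, b n ≤ ⌊p * f 0⌋₊ := fun n => by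
    refine Nat.le_floor ?_
    rw [← div_le_iff₀' hp0]
    linarith [hS _ (hbS n), hf_anti (Nat.zero_le n)]
  obtain ⟨n₁, hn₁⟩ := Nat.exists_forall_ge_eq_of_monotone hb_mono hb_le
  have hA : ∀ m, f (n₁ + m) - b n₁ / p ∈ S := fun m => hn₁ (n₁ + m) le_self_add ▸ hbS (n₁ + m)
  obtain ⟨n₂, hn₂⟩ := hacc (fun m => f (n₁ + m) - b n₁ / p) hA fun m => by
    obtain ⟨c, hc, hfc⟩ := hstep (n₁ + m)
    exact ⟨c, hc, by rw [hfc, add_sub_right_comm]; rfl⟩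
  refine exists_stable_of_shift n₁ ⟨n₂, fun m hm => ?_⟩
  obtain ⟨c, hc, hAc⟩ := hn₂ m hm
  exact ⟨c, hc, by linarith⟩

theorem addACCP_sup_map_scaleRecip (hS : ∀ x ∈ S, 0 ≤ x) (hacc : AddACCP S) (hp : 0 < p) :
    AddACCP (S ⊔ N.map (scaleRecip p)) := by
  intro f hf hstep
  obtain ⟨m, hm⟩ := exists_steps_mem_left_of_chain hS hp hf hstep
  obtain ⟨n₀, hn₀⟩ := exists_stable_of_steps_mem_left hS hacc hp (f := fun n => f (m + n))
    (fun n => hf _) fun n => hm (m + n) le_self_add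
  exact exists_stable_of_shift m
    ⟨n₀, fun n hn => (hn₀ n hn).imp fun c hc => ⟨le_sup_left (a := S) hc.1, hc.2⟩⟩

end PuiseuxSum

theorem stmt13_general (M₀ : AddSubmonoid ℚ) (hpos : ∀ x ∈ M₀, 0 ≤ x)
    (hacc : AddACCP M₀) (h1 : (1 : ℚ) ∈ M₀) (h1na : ¬ IsAtomOf M₀ 1)
    (N : AddSubmonoid ℕ)
    (p : ℕ) (hp : p.Prime)
    (hmax : ∀ a : ℕ, IsAtomOf N a → a < p)
    (hval : ∀ q : ℚ, q ∈ M₀ → q ≠ 0 → ¬ (p ∣ q.den))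
    (M : AddSubmonoid ℚ)
    (hM : (M : Set ℚ) =
      {x | ∃ a ∈ M₀, ∃ b ∈ AddSubmonoid.map (scaleRecip p) N, x = a + b}) :
    AddACCP M ∧
    ∀ a : ℚ, IsAtomOf M a ↔
      (IsAtomOf M₀ a ∨ IsAtomOf (AddSubmonoid.map (scaleRecip p) N) a) := by
  obtain rfl : M = M₀ ⊔ N.map (scaleRecip p) := SetLike.ext fun x => by
    rw [← SetLike.mem_coe, hM, AddSubmonoid.mem_sup]
    simp only [Set.mem_ofPred_eq, eq_comm]
  have hden : ∀ q ∈ M₀, ¬ p ∣ q.den := fun q hq => by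
    rcases eq_or_ne q 0 with rfl | hq0
    · simpa using hp.ne_one
    · exact hval q hq hq0
  refine ⟨addACCP_sup_map_scaleRecip hpos hacc hp.pos, fun a => ⟨IsAtomOf.of_sup, ?_⟩⟩
  rintro (ha | ha)
  · exact isAtomOf_sup_map_scaleRecip_of_left hp hden h1 h1na ha
  · exact isAtomOf_sup_map_scaleRecip_of_right hpos hp hden hmax ha

theorem stmt13 (M₀ : AddSubmonoid ℚ) (hpos : ∀ x ∈ M₀, 0 ≤ x)
    (hacc : AddACCP M₀) (h1 : (1 : ℚ) ∈ M₀) (h1na : ¬ IsAtomOf M₀ 1)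
    (N : AddSubmonoid ℕ) (hnum : {n : ℕ | n ∉ N}.Finite)
    (p : ℕ) (hp : p.Prime) (hpN : p ∈ N)
    (hmax : ∀ a : ℕ, IsAtomOf N a → a < p)
    (hval : ∀ q : ℚ, q ∈ M₀ → q ≠ 0 → ¬ (p ∣ q.den))
    (M : AddSubmonoid ℚ)
    (hM : (M : Set ℚ) =
      {x | ∃ a ∈ M₀, ∃ b ∈ AddSubmonoid.map (scaleRecip p) N, x = a + b}) :
    AddACCP M ∧
    ∀ a : ℚ, IsAtomOf M a ↔
      (IsAtomOf M₀ a ∨ IsAtomOf (AddSubmonoid.map (scaleRecip p) N) a) :=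
  stmt13_general M₀ hpos hacc h1 h1na N p hp hmax hval M hM
end
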